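/- arXiv:1602.04729 — 8 statements merged into one kernel-verified Lean document; each statement's English description precedes it below -/
import Mathlib

section
/- Let α be a real number with α < 1 and consider the symbol g obtained as the primitive of ζ(s+α)−1, i.e. g(s) = ∑_{n≥2} (n^{-α}/log n) n^{-s}. Then the Volterra operator T_g is unbounded on H²: for every C > 0 there exists a finitely supported complex sequence (a_n)_{n≥1}, not identically zero, such that ∑_{N≥2} (log N)^{-2} |∑_{d∣N} d^{-α} a_{N/d}|² > C · ∑_{n≥1} |a_n|². -/
/-! Test the form on the indicator of the divisors of the primorial `Q = ∏_{p ≤ n} p`, whose norm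
is `2^{π(n)}`. On a divisor `N ∣ Q` the convolution equals `σ(N) = ∑_{d ∣ N} d^{-α}`, so by
multiplicativity the form is at least `(∏_{p ≤ n} (1 + (1 + p^{-α})²) - 1) / log² Q`; since
`1 + (1 + x)² ≥ 2 (1 + x)` and `log Q ≤ n log 4`, the ratio is about `∏_{p ≤ n} (1 + p^{-α}) / n²`.
Each factor is at least `1 + n^{-β}` with `β = max α 0 < 1`, so by Chebyshev's bound
`π(n) ≫ n / log n` the logarithm of the product grows like `n^{1-β} / log n`, faster than
`log n²`. -/

open scoped ENNReal ArithmeticFunction.zeta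

open Finset Real Filter
open ArithmeticFunction hiding log

theorem ArithmeticFunction.IsMultiplicative.sum_divisors_primorial {R : Type*} [CommSemiring R]
    {f : ArithmeticFunction R} (hf : f.IsMultiplicative) (n : ℕ) :
    ∑ d ∈ (primorial n).divisors, f d = ∏ p ∈ n.primesLE, (1 + f p) := by
  rw [← hf.prodPrimeFactors_one_add_of_squarefree (squarefree_primorial n), primeFactors_primorial]

theorem card_divisors_primorial (n : ℕ) : #(primorial n).divisors = 2 ^ n.primeCounting :=
  calc #(primorial n).divisors
      = ∑ d ∈ (primorial n).divisors, (ζ : ArithmeticFunction ℕ) d := by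
        rw [card_eq_sum_ones]
        exact sum_congr rfl fun d hd => (zeta_apply_ne (Nat.pos_of_mem_divisors hd).ne').symm
    _ = ∏ p ∈ n.primesLE, 2 := by
        rw [isMultiplicative_zeta.sum_divisors_primorial]
        exact prod_congr rfl fun p hp => by
          rw [zeta_apply_ne (Nat.prime_of_mem_primesLE hp).ne_zero]
    _ = 2 ^ n.primeCounting := by rw [prod_const, Nat.primesLE_card_eq_primeCounting]

noncomputable def natRpow (s : ℝ) : ArithmeticFunction ℝ :=
  ⟨fun n => if n = 0 then 0 else (n : ℝ) ^ s, if_pos rfl⟩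

theorem natRpow_apply {s : ℝ} {n : ℕ} (hn : n ≠ 0) : natRpow s n = (n : ℝ) ^ s :=
  if_neg hn

theorem isMultiplicative_natRpow (s : ℝ) : (natRpow s).IsMultiplicative := by
  refine IsMultiplicative.iff_ne_zero.2 ⟨by simp [natRpow_apply], fun {m n} hm hn _ => ?_⟩
  rw [natRpow_apply (mul_ne_zero hm hn), natRpow_apply hm, natRpow_apply hn, Nat.cast_mul,
    mul_rpow (Nat.cast_nonneg m) (Nat.cast_nonneg n)]

noncomputable def sigmaRpow (s : ℝ) : ArithmeticFunction ℝ :=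
  (ζ : ArithmeticFunction ℝ) * natRpow s

theorem sigmaRpow_apply (s : ℝ) (N : ℕ) : sigmaRpow s N = ∑ d ∈ N.divisors, (d : ℝ) ^ s := by
  rw [sigmaRpow, coe_zeta_mul_apply]
  exact sum_congr rfl fun d hd => natRpow_apply (Nat.pos_of_mem_divisors hd).ne'

theorem isMultiplicative_sigmaRpow (s : ℝ) : (sigmaRpow s).IsMultiplicative :=
  isMultiplicative_zeta.natCast.mul (isMultiplicative_natRpow s)

theorem sigmaRpow_apply_prime (s : ℝ) {p : ℕ} (hp : p.Prime) : sigmaRpow s p = 1 + (p : ℝ) ^ s := by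
  rw [sigmaRpow_apply, hp.divisors, sum_pair hp.one_lt.ne, Nat.cast_one, one_rpow]

theorem two_pow_mul_prod_le_sum_sq_sigmaRpow (s : ℝ) (n : ℕ) :
    2 ^ n.primeCounting * ∏ p ∈ n.primesLE, (1 + (p : ℝ) ^ s) ≤
      ∑ N ∈ (primorial n).divisors, sigmaRpow s N ^ 2 := by
  have hsq := ((isMultiplicative_sigmaRpow s).pmul
    (isMultiplicative_sigmaRpow s)).sum_divisors_primorial n
  simp only [pmul_apply, ← sq] at hsq
  rw [hsq, ← Nat.primesLE_card_eq_primeCounting, ← prod_const, ← prod_mul_distrib]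
  gcongr with p hp
  rw [sigmaRpow_apply_prime s (Nat.prime_of_mem_primesLE hp)]
  nlinarith [sq_nonneg ((p : ℝ) ^ s)]

theorem card_mul_le_log_prod_one_add {ι : Type*} (s : Finset ι) {x : ι → ℝ} {t : ℝ}
    (ht0 : 0 ≤ t) (ht1 : t ≤ 1) (hx : ∀ i ∈ s, t ≤ x i) :
    2 / 3 * #s * t ≤ log (∏ i ∈ s, (1 + x i)) := by
  have hlog : 2 / 3 * t ≤ log (1 + t) := by
    refine le_trans ?_ (le_log_one_add_of_nonneg ht0)
    rw [le_div_iff₀ (by linarith)]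
    nlinarith
  rw [log_prod fun i hi => by linarith [hx i hi]]
  calc 2 / 3 * #s * t = ∑ _i ∈ s, 2 / 3 * t := by rw [sum_const, nsmul_eq_mul]; ring
    _ ≤ ∑ i ∈ s, log (1 + x i) :=
        sum_le_sum fun i hi => hlog.trans (log_le_log (by linarith) (by linarith [hx i hi]))

theorem eventually_div_two_log_le_primeCounting :
    ∀ᶠ n : ℕ in atTop, (n : ℝ) / (2 * log n) ≤ n.primeCounting := by
  have hlog : ∀ᶠ n : ℕ in atTop, log ((n : ℝ) + 1) ≤ 1 / 16 * ((n : ℝ) + 1) := by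
    have := (isLittleO_log_id_atTop.comp_tendsto
      (tendsto_atTop_add_const_right _ 1 tendsto_natCast_atTop_atTop)).bound
      (show (0 : ℝ) < 1 / 16 by norm_num)
    filter_upwards [this] with n hn
    simpa [abs_of_nonneg (by positivity : (0 : ℝ) ≤ n + 1)] using (le_abs_self _).trans hn
  filter_upwards [hlog, eventually_ge_atTop 2] with n hn hn2
  have hn2' : (2 : ℝ) ≤ n := by exact_mod_cast hn2
  -- In Chebyshev's bound `(n log 2 - log (n + 1)) / log n`, `log (n + 1) ≤ n / 8 < (log 2 - 1/2) n`.
  refine le_trans ?_ (Chebyshev.pi_ge n)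
  rw [show (n : ℝ) / (2 * log n) = n / 2 / log n by ring]
  exact div_le_div_of_nonneg_right (by nlinarith [log_two_gt_d9]) (log_nonneg (by linarith))

theorem eventually_lt_prod_one_add_rpow {α : ℝ} (hα : α < 1) {K : ℝ} (hK : 0 ≤ K) :
    ∀ᶠ n : ℕ in atTop, K * n ^ 2 + 1 < ∏ p ∈ n.primesLE, (1 + (p : ℝ) ^ (-α)) := by
  set β := max α 0
  have hδ : 0 < 1 - β := sub_pos.2 (max_lt hα one_pos)
  have hreal : ∀ᶠ x : ℝ in atTop, K + 1 ≤ x ∧ 9 * log x ^ 2 < x ^ (1 - β) := by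
    filter_upwards [eventually_ge_atTop (K + 1),
      (isLittleO_log_rpow_atTop (half_pos hδ)).bound (show (0 : ℝ) < 1 / 4 by norm_num)]
      with x hx hlog
    have hx0 : 0 < x := by linarith
    rw [norm_eq_abs, norm_of_nonneg (rpow_nonneg hx0.le _)] at hlog
    have hsq : x ^ (1 - β) = (x ^ ((1 - β) / 2)) ^ 2 := by
      rw [← rpow_natCast, ← rpow_mul hx0.le]; ring_nf
    have hpos : 0 < x ^ ((1 - β) / 2) := rpow_pos_of_pos hx0 _
    have := pow_le_pow_left₀ (abs_nonneg _) hlog 2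
    rw [sq_abs] at this
    exact ⟨hx, by nlinarith⟩
  filter_upwards [tendsto_natCast_atTop_atTop.eventually hreal,
    eventually_div_two_log_le_primeCounting, eventually_ge_atTop 3] with n ⟨hKn, hlog⟩ hπ hn3
  have hn : (3 : ℝ) ≤ n := by exact_mod_cast hn3
  have hlog1 : 1 ≤ log n := by
    rw [le_log_iff_exp_le (by linarith)]; linarith [exp_one_lt_d9]
  have ht1 : (n : ℝ) ^ (-β) ≤ 1 :=
    rpow_le_one_of_one_le_of_nonpos (by linarith) (neg_nonpos.2 (le_max_right α 0))
  have hpt : ∀ p ∈ n.primesLE, (n : ℝ) ^ (-β) ≤ (p : ℝ) ^ (-α) := fun p hp => by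
    have hp1 : (1 : ℝ) ≤ p := by exact_mod_cast (Nat.prime_of_mem_primesLE hp).one_lt.le
    calc (n : ℝ) ^ (-β) ≤ (p : ℝ) ^ (-β) :=
          rpow_le_rpow_of_nonpos (by linarith) (by exact_mod_cast Nat.le_of_mem_primesLE hp)
            (neg_nonpos.2 (le_max_right α 0))
      _ ≤ (p : ℝ) ^ (-α) := rpow_le_rpow_of_exponent_le hp1 (neg_le_neg (le_max_left α 0))
  have hprod := card_mul_le_log_prod_one_add n.primesLE (by positivity) ht1 hpt
  rw [Nat.primesLE_card_eq_primeCounting] at hprod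
  rw [← log_lt_log_iff (by positivity) (prod_pos fun p _ => by positivity)]
  calc log (K * n ^ 2 + 1) ≤ log ((n : ℝ) ^ 3) := log_le_log (by positivity) (by nlinarith)
    _ = 3 * log n := by rw [log_pow]; norm_num
    _ < (n : ℝ) ^ (1 - β) / (3 * log n) := by rw [lt_div_iff₀ (by positivity)]; nlinarith
    _ = 2 / 3 * ((n : ℝ) / (2 * log n)) * (n : ℝ) ^ (-β) := by
        rw [sub_eq_add_neg, rpow_add (by positivity), rpow_one]; field_simp
    _ ≤ 2 / 3 * n.primeCounting * (n : ℝ) ^ (-β) := by gcongr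
    _ ≤ _ := hprod

theorem log_primorial_le (n : ℕ) : log (primorial n) ≤ log 4 * n := by
  simpa [Chebyshev.theta_eq_log_primorial] using Chebyshev.theta_le_log4_mul_x n.cast_nonneg

noncomputable def volterraForm (α : ℝ) (a : ℕ → ℂ) : ℝ≥0∞ :=
  ∑' N : ℕ, (if 2 ≤ N then
    ENNReal.ofReal (‖∑ d ∈ N.divisors, ((((d : ℝ) ^ (-α) : ℝ)) : ℂ) * a (N / d)‖ ^ 2 /
      Real.log N ^ 2) else 0)

noncomputable def normSqH2 (a : ℕ → ℂ) : ℝ≥0∞ :=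
  ∑' n : ℕ, (if 1 ≤ n then ENNReal.ofReal (‖a n‖ ^ 2) else 0)

theorem normSqH2_indicator_divisors (Q : ℕ) :
    normSqH2 ((Q.divisors : Set ℕ).indicator 1) = #Q.divisors := by
  rw [normSqH2, tsum_eq_sum (s := Q.divisors) fun k hk => by
    simp [Set.indicator_of_notMem (mem_coe.not.2 hk)]]
  rw [card_eq_sum_ones, Nat.cast_sum]
  refine sum_congr rfl fun k hk => ?_
  simp [(Nat.pos_of_mem_divisors hk).ne', Set.indicator_of_mem (mem_coe.2 hk)]

theorem sum_divisors_rpow_mul_indicator_divisors (α : ℝ) {N Q : ℕ} (hNQ : N ∣ Q) (hQ : Q ≠ 0) :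
    ∑ d ∈ N.divisors, ((((d : ℝ) ^ (-α) : ℝ)) : ℂ) * (Q.divisors : Set ℕ).indicator 1 (N / d) =
      sigmaRpow (-α) N := by
  rw [sigmaRpow_apply, Complex.ofReal_sum]
  refine sum_congr rfl fun d hd => ?_
  rw [Set.indicator_of_mem, Pi.one_apply, mul_one]
  exact Nat.mem_divisors.2 ⟨(Nat.div_dvd_of_dvd (Nat.dvd_of_mem_divisors hd)).trans hNQ, hQ⟩

theorem ofReal_sum_sq_sigmaRpow_div_le_volterraForm (α : ℝ) {Q : ℕ} (hQ : Q ≠ 0) :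
    ENNReal.ofReal ((∑ N ∈ Q.divisors, sigmaRpow (-α) N ^ 2 - 1) / log Q ^ 2) ≤
      volterraForm α ((Q.divisors : Set ℕ).indicator 1) := by
  have hsplit : ∑ N ∈ Q.divisors, sigmaRpow (-α) N ^ 2 - 1 =
      ∑ N ∈ Q.divisors.erase 1, sigmaRpow (-α) N ^ 2 := by
    rw [← add_sum_erase _ _ (Nat.one_mem_divisors.2 hQ), (isMultiplicative_sigmaRpow _).map_one]
    ring
  rw [hsplit, sum_div, ENNReal.ofReal_sum_of_nonneg fun N _ => by positivity]
  refine le_trans (sum_le_sum fun N hN => ?_) (ENNReal.sum_le_tsum (Q.divisors.erase 1))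
  obtain ⟨hN1, hNQ⟩ := mem_erase.1 hN
  have hN2 : 2 ≤ N := by have := Nat.pos_of_mem_divisors hNQ; omega
  rw [if_pos hN2, sum_divisors_rpow_mul_indicator_divisors α (Nat.dvd_of_mem_divisors hNQ) hQ,
    Complex.norm_real, norm_eq_abs, sq_abs]
  have hlogN : 0 < log N := log_pos (by exact_mod_cast hN2)
  have hNQle : log N ≤ log Q :=
    log_le_log (by positivity) (by exact_mod_cast Nat.divisor_le hNQ)
  gcongr

/-- For `α < 1`, the Volterra operator with symbol
`g(s) = ∑_{n≥2} (n^{-α}/log n) n^{-s}` (the primitive of `ζ(s+α)-1`) is unbounded on `H²`. -/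
theorem volterra_zeta_shift_unbounded (α : ℝ) (hα : α < 1) (C : ℝ) (hC : 0 < C) :
    ∃ a : ℕ → ℂ, (Function.support a).Finite ∧ (∃ n, 1 ≤ n ∧ a n ≠ 0) ∧
      ENNReal.ofReal C * ∑' n : ℕ, (if 1 ≤ n then ENNReal.ofReal (‖a n‖ ^ 2) else 0)
        < ∑' N : ℕ, (if 2 ≤ N then
            ENNReal.ofReal
              (‖∑ d ∈ N.divisors, ((((d : ℝ) ^ (-α) : ℝ)) : ℂ) * a (N / d)‖ ^ 2 /
                Real.log N ^ 2)
          else 0) := by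
  obtain ⟨n, hgrowth, hn⟩ := ((eventually_lt_prod_one_add_rpow hα
    (by positivity : 0 ≤ C * log 4 ^ 2)).and (eventually_ge_atTop 2)).exists
  set Q := primorial n
  have hQ : Q ≠ 0 := primorial_ne_zero n
  have hlogQ : 0 < log Q :=
    log_pos (Nat.one_lt_cast.2 ((by omega : 1 < n).trans_le le_primorial_self))
  have hlogQ_le : C * log Q ^ 2 ≤ C * log 4 ^ 2 * n ^ 2 := by
    rw [mul_assoc, ← mul_pow]; gcongr; exact log_primorial_le n
  have hkey : C * #Q.divisors < (∑ N ∈ Q.divisors, sigmaRpow (-α) N ^ 2 - 1) / log Q ^ 2 := by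
    rw [lt_div_iff₀ (by positivity), card_divisors_primorial]
    push_cast
    have hpow : (1 : ℝ) ≤ 2 ^ n.primeCounting := one_le_pow₀ one_le_two
    calc C * 2 ^ n.primeCounting * log Q ^ 2
        ≤ 2 ^ n.primeCounting * (C * log 4 ^ 2 * n ^ 2) := by
          linarith [mul_le_mul_of_nonneg_left hlogQ_le (pow_nonneg zero_le_two n.primeCounting)]
      _ < 2 ^ n.primeCounting * (∏ p ∈ n.primesLE, (1 + (p : ℝ) ^ (-α)) - 1) := by
          gcongr; linarith
      _ ≤ _ := by nlinarith [two_pow_mul_prod_le_sum_sq_sigmaRpow (-α) n]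
  refine ⟨(Q.divisors : Set ℕ).indicator 1, Q.divisors.finite_toSet.subset
    Set.support_indicator_subset, ⟨1, le_rfl, by simp [hQ]⟩, ?_⟩
  change ENNReal.ofReal C * normSqH2 _ < volterraForm α _
  rw [normSqH2_indicator_divisors, ← ENNReal.ofReal_natCast, ← ENNReal.ofReal_mul hC.le]
  exact ((ENNReal.ofReal_lt_ofReal_iff_of_nonneg (by positivity)).2 hkey).trans_le
    (ofReal_sum_sq_sigmaRpow_div_le_volterraForm α hQ)
end

section
/- For every sequence (d_n)_{n≥2} of nonnegative real numbers, (3/4) · ∑_{k=0}^∞ 4^{-k} ∑_{2 ≤ n ≤ e^{2^k}} d_n ≤ ∑_{n=2}^∞ d_n/(log n)² ≤ 4 · ∑_{k=0}^∞ 4^{-k} ∑_{2 ≤ n ≤ e^{2^k}} d_n. -/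
open scoped ENNReal

open Real

/-!
Swapping the two sums turns the dyadic side into `∑_{n ≥ 2} w(log n) d_n` with
`w(L) = ∑_{k : L ≤ 2^k} 4^{-k}`. If `2^m` is the least power of two with `L ≤ 2^m`, then `w(L)`
is the geometric tail `(4/3) 4^{-m}`, and `L ≤ 2^m ≤ 2L` because `L ≥ log 2 > 1/2`; hence
`1/(3L²) ≤ w(L) ≤ 4/(3L²)`, and the two bounds follow term by term.
-/

theorem ENNReal.tsum_geometric_ge (r : ℝ≥0∞) (m : ℕ) :
    ∑' k, (if m ≤ k then r ^ k else 0) = r ^ m * (1 - r)⁻¹ := by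
  rw [← Summable.sum_add_tsum_nat_add' (k := m) ENNReal.summable,
    Finset.sum_eq_zero fun k hk => if_neg (by simpa using hk), zero_add]
  simp only [le_add_iff_nonneg_left, zero_le, if_true, pow_add, mul_comm _ (r ^ m),
    ENNReal.tsum_mul_left, ENNReal.tsum_geometric]

theorem ENNReal.one_sub_inv_four : (1 : ℝ≥0∞) - 4⁻¹ = 3 / 4 := by
  refine ENNReal.sub_eq_of_eq_add (by simp) ?_
  rw [← one_div, ENNReal.div_add_div_same, show (3 : ℝ≥0∞) + 1 = 4 by norm_num,
    ENNReal.div_self (by simp) (by simp)]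

theorem exists_two_pow_threshold {L : ℝ} (hL : 1 / 2 ≤ L) :
    ∃ m : ℕ, (∀ k : ℕ, L ≤ 2 ^ k ↔ m ≤ k) ∧ (2 : ℝ) ^ m ≤ 2 * L := by
  have hex : ∃ k : ℕ, L ≤ (2 : ℝ) ^ k :=
    (pow_unbounded_of_one_lt L one_lt_two).imp fun _ h => h.le
  refine ⟨Nat.find hex, fun k => ⟨Nat.find_min' hex, fun hk => ?_⟩, ?_⟩
  · exact (Nat.find_spec hex).trans (pow_le_pow_right₀ one_le_two hk)
  · rcases Nat.eq_zero_or_eq_succ_pred (Nat.find hex) with h | h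
    · rw [h]; linarith
    · have hlt : (2 : ℝ) ^ (Nat.find hex).pred < L :=
        lt_of_not_ge (Nat.find_min hex (by omega))
      rw [h, pow_succ]
      linarith

noncomputable def dyadicWeight (L : ℝ) : ℝ≥0∞ :=
  ∑' k : ℕ, if L ≤ 2 ^ k then 4⁻¹ ^ k else 0

theorem dyadicWeight_bounds {L : ℝ} (hL : 1 / 2 ≤ L) :
    3 / 4 * dyadicWeight L ≤ (ENNReal.ofReal (L ^ 2))⁻¹ ∧
      (ENNReal.ofReal (L ^ 2))⁻¹ ≤ 4 * dyadicWeight L := by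
  obtain ⟨m, hm, hm2⟩ := exists_two_pow_threshold hL
  have hw : dyadicWeight L = ENNReal.ofReal (4⁻¹ ^ m) * (3 / 4)⁻¹ := by
    simp_rw [dyadicWeight, hm, ENNReal.tsum_geometric_ge, ENNReal.one_sub_inv_four]
    rw [ENNReal.ofReal_pow (by norm_num), ENNReal.ofReal_inv_of_pos (by norm_num)]
    simp
  have hL0 : 0 < L := by linarith
  have h4 : ((2 : ℝ) ^ m) ^ 2 = 4 ^ m := by rw [← pow_mul, mul_comm, pow_mul]; norm_num
  have hlow : (4 : ℝ)⁻¹ ^ m ≤ (L ^ 2)⁻¹ := by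
    rw [inv_pow, ← h4]
    exact inv_anti₀ (by positivity) (pow_le_pow_left₀ hL0.le ((hm m).2 le_rfl) 2)
  have hup : (L ^ 2)⁻¹ ≤ 4 * (4 : ℝ)⁻¹ ^ m :=
    calc (L ^ 2)⁻¹ = 4 * ((2 * L) ^ 2)⁻¹ := by field_simp; ring
      _ ≤ 4 * ((2 ^ m) ^ 2)⁻¹ := by gcongr
      _ = 4 * (4 : ℝ)⁻¹ ^ m := by rw [h4, inv_pow]
  rw [← ENNReal.ofReal_inv_of_pos (by positivity), hw]
  constructor
  · rw [mul_comm, mul_assoc, ENNReal.inv_mul_cancel (by simp) (by simp [ENNReal.div_eq_top]),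
      mul_one]
    exact ENNReal.ofReal_le_ofReal hlow
  · calc ENNReal.ofReal (L ^ 2)⁻¹ ≤ ENNReal.ofReal (4 * 4⁻¹ ^ m) :=
          ENNReal.ofReal_le_ofReal hup
      _ = 4 * ENNReal.ofReal (4⁻¹ ^ m) := by rw [ENNReal.ofReal_mul (by norm_num)]; simp
      _ ≤ 4 * (ENNReal.ofReal (4⁻¹ ^ m) * (3 / 4)⁻¹) := by
        gcongr
        exact le_mul_of_one_le_right'
          (ENNReal.one_le_inv.2 (ENNReal.one_sub_inv_four ▸ tsub_le_self))

theorem mem_Icc_floor_exp_iff {n : ℕ} {y : ℝ} :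
    n ∈ Finset.Icc 2 ⌊exp y⌋₊ ↔ 2 ≤ n ∧ log n ≤ y := by
  rw [Finset.mem_Icc, and_congr_right_iff]
  intro hn
  have hn0 : (0 : ℝ) < n := by positivity
  rw [Nat.le_floor_iff (exp_pos y).le, log_le_iff_le_exp hn0]

theorem tsum_inv_four_pow_mul_sum_Icc_floor_exp (D : ℕ → ℝ≥0∞) :
    ∑' k : ℕ, (4 : ℝ≥0∞)⁻¹ ^ k * ∑ n ∈ Finset.Icc 2 ⌊exp ((2 : ℝ) ^ k)⌋₊, D n
      = ∑' n : ℕ, if 2 ≤ n then dyadicWeight (log n) * D n else 0 := by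
  calc _ = ∑' k : ℕ, ∑' n : ℕ,
        if 2 ≤ n ∧ log n ≤ 2 ^ k then (4 : ℝ≥0∞)⁻¹ ^ k * D n else 0 := by
        refine tsum_congr fun k => ?_
        rw [sum_eq_tsum_indicator, ← ENNReal.tsum_mul_left]
        simp only [Set.indicator_apply, Finset.mem_coe, mem_Icc_floor_exp_iff, mul_ite,
          mul_zero]
    _ = _ := by
        rw [ENNReal.tsum_comm]
        refine tsum_congr fun n => ?_
        split_ifs with hn
        · simp only [hn, true_and, dyadicWeight, ← ENNReal.tsum_mul_right, ite_mul, zero_mul]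
        · simp [hn]

theorem dyadic_decomposition_general (d : ℕ → ℝ) :
    (3 / 4 : ℝ≥0∞) * (∑' k : ℕ, (4 : ℝ≥0∞)⁻¹ ^ k *
        ∑ n ∈ Finset.Icc 2 ⌊Real.exp ((2 : ℝ) ^ k)⌋₊, ENNReal.ofReal (d n))
      ≤ (∑' n : ℕ, if 2 ≤ n then ENNReal.ofReal (d n) / ENNReal.ofReal (Real.log n ^ 2) else 0)
    ∧ (∑' n : ℕ, if 2 ≤ n then ENNReal.ofReal (d n) / ENNReal.ofReal (Real.log n ^ 2) else 0)
      ≤ 4 * ∑' k : ℕ, (4 : ℝ≥0∞)⁻¹ ^ k *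
        ∑ n ∈ Finset.Icc 2 ⌊Real.exp ((2 : ℝ) ^ k)⌋₊, ENNReal.ofReal (d n) := by
  have hlog : ∀ n : ℕ, 2 ≤ n → 1 / 2 ≤ log n := fun n hn =>
    calc (1 / 2 : ℝ) ≤ log 2 := by linarith [log_two_gt_d9]
      _ ≤ log n := log_le_log two_pos (by exact_mod_cast hn)
  simp_rw [tsum_inv_four_pow_mul_sum_Icc_floor_exp, ← ENNReal.tsum_mul_left]
  constructor <;> refine ENNReal.tsum_le_tsum fun n => ?_ <;> split_ifs with hn <;>
    simp only [mul_zero, le_refl, ← mul_assoc, ENNReal.div_eq_inv_mul (a := ENNReal.ofReal (d n))]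
  · exact mul_le_mul_left (dyadicWeight_bounds (hlog n hn)).1 _
  · exact mul_le_mul_left (dyadicWeight_bounds (hlog n hn)).2 _

/-- the dyadic decomposition
`(3/4) ∑_k 4^{-k} ∑_{2 ≤ n ≤ e^{2^k}} d_n ≤ ∑_{n≥2} d_n/(log n)² ≤ 4 ∑_k 4^{-k} ∑_{2 ≤ n ≤ e^{2^k}} d_n`
for every sequence of nonnegative reals `(d_n)_{n≥2}` (stated in `ℝ≥0∞` so that both sides are
always defined, possibly infinite). -/
theorem dyadic_decomposition (d : ℕ → ℝ) (hd : ∀ n, 0 ≤ d n) :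
    (3 / 4 : ℝ≥0∞) * (∑' k : ℕ, (4 : ℝ≥0∞)⁻¹ ^ k *
        ∑ n ∈ Finset.Icc 2 ⌊Real.exp ((2 : ℝ) ^ k)⌋₊, ENNReal.ofReal (d n))
      ≤ (∑' n : ℕ, if 2 ≤ n then ENNReal.ofReal (d n) / ENNReal.ofReal (Real.log n ^ 2) else 0)
    ∧ (∑' n : ℕ, if 2 ≤ n then ENNReal.ofReal (d n) / ENNReal.ofReal (Real.log n ^ 2) else 0)
      ≤ 4 * ∑' k : ℕ, (4 : ℝ≥0∞)⁻¹ ^ k *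
        ∑ n ∈ Finset.Icc 2 ⌊Real.exp ((2 : ℝ) ^ k)⌋₊, ENNReal.ofReal (d n) :=
  dyadic_decomposition_general d
end

section
/- Let ψ : ℕ_{≥1} → [0,∞) be an arbitrary nonnegative arithmetic function, φ : ℕ_{≥1} → (0,∞) an arbitrary positive arithmetic function, x ≥ 1 a real number, and (a_k)_{k≥1} a complex sequence. Then ∑_{n ≤ x} |∑_{d∣n} ψ(d) a_{n/d}|² ≤ (∑_{n ≤ x} φ(n)ψ(n)) · (max_{m ≤ x} ∑_{d∣m} ψ(d)/φ(d)) · ∑_{k ≤ x} |a_k|². -/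
/-!
For each `n`, Cauchy–Schwarz with the weights `ψ d / φ d` and `φ d * ψ d` bounds
`|∑_{d∣n} ψ(d) a_{n/d}|²` by `(∑_{d∣n} ψ(d)/φ(d)) · ∑_{d∣n} φ(d)ψ(d)|a_{n/d}|²`. The first factor
is at most its maximum over `n ≤ x`; summing the second over `n ≤ x` runs over the pairs `(d, k)`
with `dk ≤ x`, all of which lie in the square `[1, x]²`, and the sum over the square factors.
-/

open Finset

namespace Finset

theorem sq_sum_mul_le_sum_div_mul_sum_mul_mul_sq {ι R : Type*} [Field R] [LinearOrder R]
    [IsStrictOrderedRing R] (s : Finset ι) {w v : ι → R} (hw : ∀ i ∈ s, 0 ≤ w i)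
    (hv : ∀ i ∈ s, 0 < v i) (b : ι → R) :
    (∑ i ∈ s, w i * b i) ^ 2 ≤ (∑ i ∈ s, w i / v i) * ∑ i ∈ s, v i * w i * b i ^ 2 := by
  refine sum_sq_le_sum_mul_sum_of_sq_le_mul s (fun i hi => div_nonneg (hw i hi) (hv i hi).le)
    (fun i hi => by have := hw i hi; have := hv i hi; positivity) fun i hi => le_of_eq ?_
  have := (hv i hi).ne'
  field_simp

theorem sum_mul_le_sup'_mul_sum {ι R : Type*} [Semiring R] [LinearOrder R]
    [IsOrderedRing R] {s : Finset ι} (hs : s.Nonempty) (f : ι → R) {g : ι → R}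
    (hg : ∀ i ∈ s, 0 ≤ g i) : ∑ i ∈ s, f i * g i ≤ s.sup' hs f * ∑ i ∈ s, g i := by
  rw [mul_sum]
  exact sum_le_sum fun i hi => mul_le_mul_of_nonneg_right (le_sup' f hi) (hg i hi)

end Finset

theorem Complex.norm_sum_ofReal_mul_sq_le {ι : Type*} (s : Finset ι) {w v : ι → ℝ}
    (hw : ∀ i ∈ s, 0 ≤ w i) (hv : ∀ i ∈ s, 0 < v i) (z : ι → ℂ) :
    ‖∑ i ∈ s, (w i : ℂ) * z i‖ ^ 2 ≤ (∑ i ∈ s, w i / v i) * ∑ i ∈ s, v i * w i * ‖z i‖ ^ 2 := by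
  have htriangle : ‖∑ i ∈ s, (w i : ℂ) * z i‖ ≤ ∑ i ∈ s, w i * ‖z i‖ :=
    (norm_sum_le _ _).trans_eq <| sum_congr rfl fun i hi => by
      rw [norm_mul, Complex.norm_real, Real.norm_of_nonneg (hw i hi)]
  calc ‖∑ i ∈ s, (w i : ℂ) * z i‖ ^ 2 ≤ (∑ i ∈ s, w i * ‖z i‖) ^ 2 := by gcongr
    _ ≤ _ := s.sq_sum_mul_le_sum_div_mul_sum_mul_mul_sq hw hv _

theorem Nat.sum_Icc_sum_divisorsAntidiagonal_le {M : Type*} [AddCommMonoid M] [PartialOrder M]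
    [IsOrderedAddMonoid M] {f : ℕ × ℕ → M} (hf : ∀ p, 0 ≤ f p) (N : ℕ) :
    ∑ n ∈ Icc 1 N, ∑ p ∈ n.divisorsAntidiagonal, f p ≤ ∑ p ∈ Icc 1 N ×ˢ Icc 1 N, f p := by
  have hfiber : ∀ n ∈ Icc 1 N,
      n.divisorsAntidiagonal = {p ∈ Icc 1 N ×ˢ Icc 1 N | p.1 * p.2 = n} := fun n hn => by
    rw [mem_Icc] at hn
    rw [show Icc 1 N = Ioc 0 N from Icc_add_one_left_eq_Ioc 0 N]
    exact Nat.divisorsAntidiagonal_eq_prod_filter_of_le (by omega) hn.2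
  rw [sum_congr rfl fun n hn => by rw [hfiber n hn]]
  exact sum_fiberwise_le_sum_of_sum_fiber_nonneg fun _ _ => sum_nonneg fun p _ => hf p

theorem Nat.sum_Icc_sum_divisors_mul_le {R : Type*} [CommSemiring R] [PartialOrder R]
    [IsOrderedRing R] {f g : ℕ → R} (hf : ∀ n, 0 ≤ f n) (hg : ∀ n, 0 ≤ g n) (N : ℕ) :
    ∑ n ∈ Icc 1 N, ∑ d ∈ n.divisors, f d * g (n / d)
      ≤ (∑ n ∈ Icc 1 N, f n) * ∑ k ∈ Icc 1 N, g k := by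
  rw [sum_mul_sum, ← sum_product']
  simp_rw [← Nat.sum_divisorsAntidiagonal fun d k => f d * g k]
  exact Nat.sum_Icc_sum_divisorsAntidiagonal_le (fun p => mul_nonneg (hf p.1) (hg p.2)) N

/-- the Cauchy–Schwarz bound for the truncated multiplier:
`∑_{n ≤ x} |∑_{d∣n} ψ(d) a_{n/d}|² ≤ (∑_{n ≤ x} φ(n)ψ(n)) · (max_{m ≤ x} ∑_{d∣m} ψ(d)/φ(d))
  · ∑_{k ≤ x} |a_k|²`. -/
theorem truncated_multiplier_bound (ψ : ℕ → ℝ) (hψ : ∀ n, 0 ≤ ψ n)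
    (φ : ℕ → ℝ) (hφ : ∀ n, 0 < φ n) (x : ℝ) (hx : 1 ≤ x) (a : ℕ → ℂ) :
    ∑ n ∈ Finset.Icc 1 ⌊x⌋₊, ‖∑ d ∈ n.divisors, ((ψ d : ℝ) : ℂ) * a (n / d)‖ ^ 2
      ≤ (∑ n ∈ Finset.Icc 1 ⌊x⌋₊, φ n * ψ n) *
        ((Finset.Icc 1 ⌊x⌋₊).sup'
            (Finset.nonempty_Icc.mpr (Nat.le_floor (by exact_mod_cast hx)))
            fun m => ∑ d ∈ m.divisors, ψ d / φ d) *
        ∑ k ∈ Finset.Icc 1 ⌊x⌋₊, ‖a k‖ ^ 2 := by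
  set N := ⌊x⌋₊
  have hN : (Icc 1 N).Nonempty := nonempty_Icc.mpr (Nat.le_floor (by exact_mod_cast hx))
  set S := (Icc 1 N).sup' hN fun m => ∑ d ∈ m.divisors, ψ d / φ d
  have hS : 0 ≤ S := le_sup'_of_le _ (left_mem_Icc.mpr (nonempty_Icc.mp hN))
    (sum_nonneg fun d _ => div_nonneg (hψ d) (hφ d).le)
  calc ∑ n ∈ Icc 1 N, ‖∑ d ∈ n.divisors, ((ψ d : ℝ) : ℂ) * a (n / d)‖ ^ 2
      ≤ ∑ n ∈ Icc 1 N, (∑ d ∈ n.divisors, ψ d / φ d) *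
          ∑ d ∈ n.divisors, φ d * ψ d * ‖a (n / d)‖ ^ 2 :=
        sum_le_sum fun n _ => Complex.norm_sum_ofReal_mul_sq_le _ (fun d _ => hψ d)
          (fun d _ => hφ d) fun d => a (n / d)
    _ ≤ S * ∑ n ∈ Icc 1 N, ∑ d ∈ n.divisors, φ d * ψ d * ‖a (n / d)‖ ^ 2 :=
        sum_mul_le_sup'_mul_sum hN _ fun n _ =>
          sum_nonneg fun d _ => by have := hψ d; have := hφ d; positivity
    _ ≤ S * ((∑ n ∈ Icc 1 N, φ n * ψ n) * ∑ k ∈ Icc 1 N, ‖a k‖ ^ 2) := by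
        gcongr
        exact Nat.sum_Icc_sum_divisors_mul_le (f := fun n => φ n * ψ n) (g := fun k => ‖a k‖ ^ 2)
          (fun n => mul_nonneg (hφ n).le (hψ n)) (fun k => by positivity) N
    _ = _ := by ring
end

section
/- Let (b_p), indexed by the prime numbers p, be a complex sequence with ∑_p |b_p|² < ∞, corresponding to the linear symbol g(s) = ∑_p b_p p^{-s}. Then the operator norm of the Volterra operator T_g on H² equals ‖g‖_{H²}: the supremum of ∑_{N≥2} (log N)^{-2} |∑_{p∣N, p prime} b_p (log p) a_{N/p}|² over all complex sequences (a_n)_{n≥1} with ∑_{n≥1}|a_n|² ≤ 1 is exactly ∑_p |b_p|². -/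
/-!
For each `N`, Cauchy–Schwarz with weights `log p`, together with `∑_{p ∣ N} log p ≤ log N`
(the von Mangoldt function sums to `log N` over the divisors), gives
`|∑_{p ∣ N} b_p (log p) a_{N/p}|² ≤ (log N)² ∑_{p ∣ N} |b_p|² |a_{N/p}|²`.
Summed over `N`, the right-hand side is a Dirichlet convolution whose total is
`(∑_p |b_p|²)(∑_n |a_n|²)`. Equality is attained at `a = e₁`, i.e. `f = 1`, for which `T_g 1 = g`.
-/

open scoped ENNReal
open Finset

lemma norm_sum_smul_sq_le {ι E : Type*} [SeminormedAddCommGroup E] [NormedSpace ℝ E]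
    (s : Finset ι) {w : ι → ℝ} (hw : ∀ i ∈ s, 0 ≤ w i) (z : ι → E) :
    ‖∑ i ∈ s, w i • z i‖ ^ 2 ≤ (∑ i ∈ s, w i) * ∑ i ∈ s, w i * ‖z i‖ ^ 2 := by
  have hterm : ∀ i ∈ s, ‖w i • z i‖ = w i * ‖z i‖ := fun i hi => by
    rw [norm_smul, Real.norm_of_nonneg (hw i hi)]
  calc ‖∑ i ∈ s, w i • z i‖ ^ 2 ≤ (∑ i ∈ s, w i * ‖z i‖) ^ 2 := by
        gcongr
        exact (norm_sum_le _ _).trans_eq (sum_congr rfl hterm)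
    _ ≤ _ := sum_sq_le_sum_mul_sum_of_sq_le_mul s hw
        (fun i hi => mul_nonneg (hw i hi) (sq_nonneg _)) fun i _ => le_of_eq (by ring)

lemma Nat.sum_log_primeFactors_le_log (N : ℕ) :
    ∑ p ∈ N.primeFactors, Real.log p ≤ Real.log N := by
  open ArithmeticFunction in
  calc ∑ p ∈ N.primeFactors, Real.log p
      = ∑ p ∈ N.primeFactors, Λ p :=
        sum_congr rfl fun p hp =>
          (vonMangoldt_apply_prime (Nat.prime_of_mem_primeFactors hp)).symm
    _ ≤ ∑ d ∈ N.divisors, Λ d :=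
        sum_le_sum_of_subset_of_nonneg
          (Nat.primeFactors_eq_to_filter_divisors_prime N ▸ filter_subset _ _)
          fun _ _ _ => vonMangoldt_nonneg
    _ = Real.log N := vonMangoldt_sum

lemma ENNReal.tsum_sum_divisors_mul {f g : ℕ → ℝ≥0∞} (hf : f 0 = 0) (hg : g 0 = 0) :
    ∑' N, ∑ d ∈ N.divisors, f d * g (N / d) = (∑' d, f d) * ∑' m, g m := by
  have hmultiples (d : ℕ) :
      ∑' N, (if d ∈ N.divisors then f d * g (N / d) else 0) = f d * ∑' m, g m := by
    rcases d.eq_zero_or_pos with rfl | hd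
    · simp [hf]
    rw [← ENNReal.tsum_mul_left, ← (mul_right_injective₀ hd.ne').tsum_eq]
    · refine tsum_congr fun m => ?_
      rcases m.eq_zero_or_pos with rfl | hm
      · simp [hg]
      · simp [hd.ne', hm.ne', Nat.mul_div_cancel_left m hd]
    · intro N hN
      obtain ⟨m, rfl⟩ := Nat.dvd_of_mem_divisors (of_not_not fun h => hN (if_neg h))
      exact ⟨m, rfl⟩
  calc ∑' N, ∑ d ∈ N.divisors, f d * g (N / d)
      = ∑' N, ∑' d, if d ∈ N.divisors then f d * g (N / d) else 0 := by
        refine tsum_congr fun N => ?_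
        rw [sum_eq_tsum_indicator]
        simp only [Set.indicator_apply, mem_coe]
    _ = ∑' d, f d * ∑' m, g m := by rw [ENNReal.tsum_comm]; exact tsum_congr hmultiples
    _ = _ := ENNReal.tsum_mul_right

lemma norm_sum_primeFactors_sq_div_log_sq_le (b a : ℕ → ℂ) (N : ℕ) :
    ‖∑ p ∈ N.divisors.filter Nat.Prime, b p * (Real.log p : ℂ) * a (N / p)‖ ^ 2 /
        Real.log N ^ 2
      ≤ ∑ p ∈ N.divisors.filter Nat.Prime, ‖b p‖ ^ 2 * ‖a (N / p)‖ ^ 2 := by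
  rw [← Nat.primeFactors_eq_to_filter_divisors_prime]
  set S := N.primeFactors
  have hlog : ∀ p ∈ S, 0 ≤ Real.log p := fun p _ => Real.log_natCast_nonneg p
  have hlogN : ∀ p ∈ S, Real.log p ≤ Real.log N := fun p hp =>
    (single_le_sum hlog hp).trans N.sum_log_primeFactors_le_log
  have hsmul : ∑ p ∈ S, b p * (Real.log p : ℂ) * a (N / p)
      = ∑ p ∈ S, Real.log p • (b p * a (N / p)) :=
    sum_congr rfl fun p _ => by rw [Complex.real_smul]; ring
  have hrhs : 0 ≤ ∑ p ∈ S, ‖b p‖ ^ 2 * ‖a (N / p)‖ ^ 2 := by positivity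
  rcases (Real.log_natCast_nonneg N).eq_or_lt with hN | hN
  · rwa [← hN, zero_pow two_ne_zero, div_zero]
  rw [div_le_iff₀ (by positivity), hsmul]
  calc ‖∑ p ∈ S, Real.log p • (b p * a (N / p))‖ ^ 2
      ≤ (∑ p ∈ S, Real.log p) * ∑ p ∈ S, Real.log p * ‖b p * a (N / p)‖ ^ 2 :=
        norm_sum_smul_sq_le S hlog _
    _ ≤ Real.log N * ∑ p ∈ S, Real.log N * (‖b p‖ ^ 2 * ‖a (N / p)‖ ^ 2) := by
        refine mul_le_mul N.sum_log_primeFactors_le_log (sum_le_sum fun p hp => ?_)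
          (sum_nonneg fun p hp => mul_nonneg (hlog p hp) (sq_nonneg _)) hN.le
        rw [norm_mul, mul_pow]
        exact mul_le_mul_of_nonneg_right (hlogN p hp) (by positivity)
    _ = _ := by rw [← mul_sum]; ring

lemma volterra_term_le_sum_divisors (b a : ℕ → ℂ) (N : ℕ) :
    (if 2 ≤ N then
        ENNReal.ofReal
          (‖∑ p ∈ N.divisors.filter Nat.Prime, b p * (Real.log p : ℂ) * a (N / p)‖ ^ 2 /
            Real.log N ^ 2)
      else 0)
      ≤ ∑ d ∈ N.divisors, (if d.Prime then ENNReal.ofReal (‖b d‖ ^ 2) else 0) *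
          (if 1 ≤ N / d then ENNReal.ofReal (‖a (N / d)‖ ^ 2) else 0) := by
  calc (if 2 ≤ N then _ else 0)
      ≤ ENNReal.ofReal
          (‖∑ p ∈ N.divisors.filter Nat.Prime, b p * (Real.log p : ℂ) * a (N / p)‖ ^ 2 /
            Real.log N ^ 2) := by
        split_ifs <;> simp
    _ ≤ ENNReal.ofReal (∑ p ∈ N.divisors.filter Nat.Prime, ‖b p‖ ^ 2 * ‖a (N / p)‖ ^ 2) :=
        ENNReal.ofReal_le_ofReal (norm_sum_primeFactors_sq_div_log_sq_le b a N)
    _ = _ := by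
        rw [ENNReal.ofReal_sum_of_nonneg fun p _ => by positivity, sum_filter]
        refine sum_congr rfl fun d hd => ?_
        have hdiv : 1 ≤ N / d := Nat.div_pos (Nat.divisor_le hd) (Nat.pos_of_mem_divisors hd)
        split_ifs
        · exact ENNReal.ofReal_mul (sq_nonneg _)
        · simp

lemma sum_primeFactors_mul_single_one (b : ℕ → ℂ) (N : ℕ) :
    ∑ p ∈ N.divisors.filter Nat.Prime, b p * (Real.log p : ℂ) * (Pi.single 1 1 : ℕ → ℂ) (N / p)
      = if N.Prime then b N * Real.log N else 0 := by
  by_cases hN : N.Prime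
  · rw [← Nat.primeFactors_eq_to_filter_divisors_prime, hN.primeFactors, sum_singleton,
      Nat.div_self hN.pos, Pi.single_eq_same, if_pos hN, mul_one]
  · rw [if_neg hN]
    refine sum_eq_zero fun p hp => ?_
    obtain ⟨hpN, hp⟩ := mem_filter.1 hp
    have hquot : N / p ≠ 1 := fun h =>
      hN (Nat.eq_of_dvd_of_div_eq_one (Nat.dvd_of_mem_divisors hpN) h ▸ hp)
    rw [Pi.single_eq_of_ne hquot, mul_zero]

lemma volterra_term_single_one (b : ℕ → ℂ) (N : ℕ) :
    (if 2 ≤ N then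
        ENNReal.ofReal
          (‖∑ p ∈ N.divisors.filter Nat.Prime,
              b p * (Real.log p : ℂ) * (Pi.single 1 1 : ℕ → ℂ) (N / p)‖ ^ 2 / Real.log N ^ 2)
      else 0)
      = if N.Prime then ENNReal.ofReal (‖b N‖ ^ 2) else 0 := by
  rw [sum_primeFactors_mul_single_one]
  by_cases hN : N.Prime
  · have hlog : Real.log N ≠ 0 := (Real.log_pos (by exact_mod_cast hN.one_lt)).ne'
    rw [if_pos hN.two_le, if_pos hN, if_pos hN, norm_mul, Complex.norm_real,
      Real.norm_of_nonneg (Real.log_natCast_nonneg N), mul_pow,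
      mul_div_cancel_right₀ _ (pow_ne_zero 2 hlog)]
  · simp [hN]

lemma tsum_sq_single_one :
    (∑' n : ℕ, if 1 ≤ n then ENNReal.ofReal (‖(Pi.single 1 1 : ℕ → ℂ) n‖ ^ 2) else 0) = 1 := by
  rw [tsum_eq_single 1 fun n hn => by simp [Pi.single_eq_of_ne hn]]
  simp

theorem volterra_linear_symbol_norm_general (b : ℕ → ℂ) :
    (⨆ a ∈ {a : ℕ → ℂ |
        (∑' n : ℕ, if 1 ≤ n then ENNReal.ofReal (‖a n‖ ^ 2) else 0) ≤ 1},
      ∑' N : ℕ, (if 2 ≤ N then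
          ENNReal.ofReal
            (‖∑ p ∈ N.divisors.filter Nat.Prime, b p * (Real.log p : ℂ) * a (N / p)‖ ^ 2 /
              Real.log N ^ 2)
        else 0))
    = ∑' p : ℕ, if p.Prime then ENNReal.ofReal (‖b p‖ ^ 2) else 0 := by
  apply le_antisymm
  · refine iSup₂_le fun a ha => ?_
    calc _ ≤ ∑' N, ∑ d ∈ N.divisors, (if d.Prime then ENNReal.ofReal (‖b d‖ ^ 2) else 0) *
            (if 1 ≤ N / d then ENNReal.ofReal (‖a (N / d)‖ ^ 2) else 0) :=
          ENNReal.tsum_le_tsum fun N => volterra_term_le_sum_divisors b a N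
      _ = (∑' p : ℕ, if p.Prime then ENNReal.ofReal (‖b p‖ ^ 2) else 0) *
            ∑' n : ℕ, if 1 ≤ n then ENNReal.ofReal (‖a n‖ ^ 2) else 0 :=
          ENNReal.tsum_sum_divisors_mul (if_neg Nat.not_prime_zero)
            (g := fun n => if 1 ≤ n then ENNReal.ofReal (‖a n‖ ^ 2) else 0) (by simp)
      _ ≤ _ := mul_le_of_le_one_right' ha
  · refine le_iSup₂_of_le (Pi.single 1 1) tsum_sq_single_one.le
      (tsum_congr fun N => volterra_term_single_one b N).ge

/-- for a linear symbol `g(s) = ∑_p b_p p^{-s}` with square-summable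
coefficients, the operator norm of the Volterra operator on `H²` equals `‖g‖_{H²}`:
the supremum of `∑_{N≥2} (log N)^{-2} |∑_{p∣N prime} b_p (log p) a_{N/p}|²` over the unit ball
`∑_{n≥1}|a_n|² ≤ 1` is exactly `∑_p |b_p|²`. -/
theorem volterra_linear_symbol_norm (b : ℕ → ℂ)
    (hb : (∑' p : ℕ, if p.Prime then ENNReal.ofReal (‖b p‖ ^ 2) else 0) ≠ ⊤) :
    (⨆ a ∈ {a : ℕ → ℂ |
        (∑' n : ℕ, if 1 ≤ n then ENNReal.ofReal (‖a n‖ ^ 2) else 0) ≤ 1},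
      ∑' N : ℕ, (if 2 ≤ N then
          ENNReal.ofReal
            (‖∑ p ∈ N.divisors.filter Nat.Prime, b p * (Real.log p : ℂ) * a (N / p)‖ ^ 2 /
              Real.log N ^ 2)
        else 0))
    = ∑' p : ℕ, if p.Prime then ENNReal.ofReal (‖b p‖ ^ 2) else 0 :=
  volterra_linear_symbol_norm_general b
end

section
/- For every integer n ≥ 2 and every integer m ≥ 1, ∑_{k∣n, Ω(k)=m} log k ≤ m · ω(n)^{m−1} · log n, where the sum runs over the divisors k of n having exactly m prime factors counted with multiplicity. -/
/-!
A divisor `k` of `n` with `Ω(k) = m + 1` is determined by the pair `(minFac k, k / minFac k)`,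
a prime factor of `n` and a divisor with `Ω = m`. Hence there are at most `ω(n)^m` such
divisors, and splitting `log k = log (minFac k) + log (k / minFac k)` gives the recursion
`L (m + 1) ≤ ω(n)^m log n + ω(n) L m` for `L m = ∑_{k ∣ n, Ω(k) = m} log k`, using
`∑_{p ∣ n} log p ≤ log n`. Induction on `m` finishes the proof.
-/

open Finset

namespace Nat

def divisorsWithCardFactors (n m : ℕ) : Finset ℕ :=
  n.divisors.filter (fun k => k.primeFactorsList.length = m)

lemma divisorsWithCardFactors_zero_subset (n : ℕ) : n.divisorsWithCardFactors 0 ⊆ {1} := by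
  intro k hk
  simp only [divisorsWithCardFactors, mem_filter, mem_divisors, List.length_eq_zero_iff,
    primeFactorsList_eq_nil] at hk
  obtain ⟨⟨hkn, hn⟩, rfl | rfl⟩ := hk
  · exact absurd (zero_dvd_iff.mp hkn) hn
  · exact mem_singleton_self 1

lemma minFac_div_minFac_injective : Function.Injective fun k : ℕ => (k.minFac, k / k.minFac) := by
  intro a b hab
  obtain ⟨hmin, hdiv⟩ := Prod.ext_iff.mp hab
  calc a = a.minFac * (a / a.minFac) := (Nat.mul_div_cancel' a.minFac_dvd).symm
    _ = b.minFac * (b / b.minFac) := congrArg₂ (· * ·) hmin hdiv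
    _ = b := Nat.mul_div_cancel' b.minFac_dvd

lemma minFac_div_mem_primeFactors_product {n m k : ℕ}
    (hk : k ∈ n.divisorsWithCardFactors (m + 1)) :
    (k.minFac, k / k.minFac) ∈ n.primeFactors ×ˢ n.divisorsWithCardFactors m := by
  simp only [divisorsWithCardFactors, mem_filter, mem_divisors] at hk
  obtain ⟨⟨hkn, hn⟩, hlen⟩ := hk
  obtain _ | _ | k := k
  · exact absurd (zero_dvd_iff.mp hkn) hn
  · simp at hlen
  rw [primeFactorsList_add_two, List.length_cons, Nat.add_right_cancel_iff] at hlen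
  have hmin : (k + 2).minFac ∣ k + 2 := minFac_dvd _
  simp only [mem_product, mem_primeFactors, divisorsWithCardFactors, mem_filter, mem_divisors]
  exact ⟨⟨minFac_prime (by omega), hmin.trans hkn, hn⟩,
    ⟨(div_dvd_of_dvd hmin).trans hkn, hn⟩, hlen⟩

lemma card_divisorsWithCardFactors_le (n m : ℕ) :
    #(n.divisorsWithCardFactors m) ≤ #n.primeFactors ^ m := by
  induction m with
  | zero => simpa using card_le_card (divisorsWithCardFactors_zero_subset n)
  | succ m ih =>
    calc #(n.divisorsWithCardFactors (m + 1))
        ≤ #(n.primeFactors ×ˢ n.divisorsWithCardFactors m) :=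
          card_le_card_of_injOn _ (fun _ => minFac_div_mem_primeFactors_product)
            minFac_div_minFac_injective.injOn
      _ ≤ #n.primeFactors ^ (m + 1) := by
          rw [card_product, pow_succ']
          exact Nat.mul_le_mul_left _ ih

lemma sum_log_primeFactors_le (n : ℕ) : ∑ p ∈ n.primeFactors, Real.log p ≤ Real.log n := by
  rcases eq_or_ne n 0 with rfl | hn
  · simp
  rw [← Real.log_prod fun p hp => by exact_mod_cast (prime_of_mem_primeFactors hp).ne_zero,
    ← Nat.cast_prod]
  have hprod_pos : 0 < ∏ p ∈ n.primeFactors, p :=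
    prod_pos fun p hp => (prime_of_mem_primeFactors hp).pos
  gcongr
  exact Nat.le_of_dvd (Nat.pos_of_ne_zero hn) (prod_primeFactors_dvd n)

lemma sum_log_divisorsWithCardFactors_succ_le (n m : ℕ) :
    ∑ k ∈ n.divisorsWithCardFactors (m + 1), Real.log k
      ≤ #(n.divisorsWithCardFactors m) * Real.log n
        + #n.primeFactors * ∑ k ∈ n.divisorsWithCardFactors m, Real.log k := by
  set D := n.divisorsWithCardFactors m
  calc ∑ k ∈ n.divisorsWithCardFactors (m + 1), Real.log k
      = ∑ x ∈ (n.divisorsWithCardFactors (m + 1)).image fun k => (k.minFac, k / k.minFac),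
          Real.log (x.1 * x.2 : ℕ) := by
        rw [sum_image minFac_div_minFac_injective.injOn]
        simp only [Nat.mul_div_cancel' (minFac_dvd _)]
    _ ≤ ∑ x ∈ n.primeFactors ×ˢ D, Real.log (x.1 * x.2 : ℕ) :=
        sum_le_sum_of_subset_of_nonneg
          (image_subset_iff.mpr fun _ => minFac_div_mem_primeFactors_product)
          fun _ _ _ => Real.log_natCast_nonneg _
    _ = ∑ x ∈ n.primeFactors ×ˢ D, (Real.log x.1 + Real.log x.2) := by
        refine sum_congr rfl fun x hx => ?_
        obtain ⟨hp, hd⟩ := mem_product.mp hx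
        rw [Nat.cast_mul, Real.log_mul (by exact_mod_cast (prime_of_mem_primeFactors hp).ne_zero)
          (by exact_mod_cast (pos_of_mem_divisors (mem_filter.mp hd).1).ne')]
    _ = #D * ∑ p ∈ n.primeFactors, Real.log p + #n.primeFactors * ∑ k ∈ D, Real.log k := by
        simp only [sum_product, sum_add_distrib, sum_const, nsmul_eq_mul, mul_sum]
    _ ≤ #D * Real.log n + #n.primeFactors * ∑ k ∈ D, Real.log k := by
        gcongr
        exact sum_log_primeFactors_le n

end Nat

theorem divisor_log_sum_bound_general (n m : ℕ) :
    ∑ k ∈ n.divisors.filter (fun k => k.primeFactorsList.length = m), Real.log k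
      ≤ (m : ℝ) * (n.primeFactors.card : ℝ) ^ (m - 1) * Real.log n := by
  change ∑ k ∈ n.divisorsWithCardFactors m, Real.log k ≤ _
  induction m with
  | zero =>
    calc ∑ k ∈ n.divisorsWithCardFactors 0, Real.log k
        ≤ ∑ k ∈ ({1} : Finset ℕ), Real.log k :=
          sum_le_sum_of_subset_of_nonneg (Nat.divisorsWithCardFactors_zero_subset n)
            fun _ _ _ => Real.log_natCast_nonneg _
      _ = _ := by simp
  | succ m ih =>
    have hcard : (#(n.divisorsWithCardFactors m) : ℝ) ≤ (#n.primeFactors : ℝ) ^ m := by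
      exact_mod_cast Nat.card_divisorsWithCardFactors_le n m
    calc ∑ k ∈ n.divisorsWithCardFactors (m + 1), Real.log k
        ≤ #(n.divisorsWithCardFactors m) * Real.log n
          + #n.primeFactors * ∑ k ∈ n.divisorsWithCardFactors m, Real.log k :=
          Nat.sum_log_divisorsWithCardFactors_succ_le n m
      _ ≤ (#n.primeFactors : ℝ) ^ m * Real.log n
          + #n.primeFactors * (m * (#n.primeFactors : ℝ) ^ (m - 1) * Real.log n) := by
          gcongr
      _ = ((m + 1 : ℕ) : ℝ) * (#n.primeFactors : ℝ) ^ m * Real.log n := by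
          rcases m with _ | m
          · simp
          · push_cast
            ring

/-- for `n ≥ 2` and `m ≥ 1`,
`∑_{k∣n, Ω(k)=m} log k ≤ m · ω(n)^{m-1} · log n`, where `Ω` counts prime factors with
multiplicity and `ω` counts distinct prime factors. -/
theorem divisor_log_sum_bound (n m : ℕ) (hn : 2 ≤ n) (hm : 1 ≤ m) :
    ∑ k ∈ n.divisors.filter (fun k => k.primeFactorsList.length = m), Real.log k
      ≤ (m : ℝ) * (n.primeFactors.card : ℝ) ^ (m - 1) * Real.log n :=
  divisor_log_sum_bound_general n m
end

section
/- The weight (log n)/log₂ n for 2-homogeneous symbols is sharp in the following sense: for every ε > 0 and every C > 0 there exist a finitely supported complex sequence (b_n)_{n≥2} supported on the integers n with Ω(n) = 2 and a finitely supported complex sequence (a_n)_{n≥1}, not identically zero, such that ∑_{N≥2} (log N)^{-2} |∑_{k∣N, Ω(k)=2} b_k (log k) a_{N/k}|² > C · (∑_{Ω(n)=2} |b_n|² (log n)/(log₂ n)^{1+ε}) · ∑_{n≥1} |a_n|². -/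
open scoped ENNReal

/-- `log₂ x = log log x`, with the convention that it equals `1` for `x ≤ e^e`. -/
noncomputable def loglog (x : ℝ) : ℝ := max 1 (Real.log (Real.log x))

/-!
Let `P` be the primes up to `x`, `k = #P / 2`, and `q` a prime in `(x^(k+1), 2 x^(k+1)]`
(Bertrand). Take `b` the indicator of `{p q : p ∈ P}` and `a` the indicator of the products of
`k` distinct primes of `P`. Each of the `C(#P, k+1)` integers `N = q p₁ ⋯ p_{k+1}` has the
`k + 1` divisors `pᵢ q` contributing `log (pᵢ q) ≥ log q`, while `log N ≤ 2 log q`, so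
`‖T_b a‖² ≥ C(#P, k+1) (k+1)² / 4`. On the other side `‖a‖² = C(#P, k)` and the weighted norm
of `b` is at most `#P · 2 log q / (log₂ q)^(1+ε)`. As `C(#P, k+1) (k+1) = C(#P, k) (#P - k)`,
the ratio is of order `k (log₂ q)^(1+ε) / log q ≈ (log k)^(1+ε) / log x`, which is unbounded
because Chebyshev's bound gives `#P ≥ √x` for large `x`.
-/

open Finset Real Filter

noncomputable def hardyNormSq (a : ℕ → ℂ) : ℝ≥0∞ :=
  ∑' n : ℕ, if 1 ≤ n then ENNReal.ofReal (‖a n‖ ^ 2) else 0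

noncomputable def twoHomogeneousWeight (s : ℝ) (b : ℕ → ℂ) : ℝ≥0∞ :=
  ∑' n : ℕ, if n.primeFactorsList.length = 2 then
    ENNReal.ofReal (‖b n‖ ^ 2 * Real.log n / loglog n ^ s) else 0

/-- `log N` times the `N`-th coefficient of `T_b a`, when `b` is supported on `Ω = 2`. -/
noncomputable def volterraSum (b a : ℕ → ℂ) (N : ℕ) : ℂ :=
  ∑ k ∈ N.divisors.filter (fun k => k.primeFactorsList.length = 2),
    b k * (Real.log k : ℂ) * a (N / k)

noncomputable def volterraNormSq (b a : ℕ → ℂ) : ℝ≥0∞ :=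
  ∑' N : ℕ, if 2 ≤ N then ENNReal.ofReal (‖volterraSum b a N‖ ^ 2 / Real.log N ^ 2) else 0

lemma one_le_loglog (x : ℝ) : 1 ≤ loglog x := le_max_left _ _

lemma loglog_le_loglog {x y : ℝ} (hx : 1 ≤ x) (hxy : x ≤ y) : loglog x ≤ loglog y := by
  rcases (log_nonneg hx).eq_or_lt with h | h
  · rw [loglog, ← h, log_zero, max_eq_left zero_le_one]
    exact one_le_loglog y
  · exact max_le_max le_rfl (log_le_log h (log_le_log (by linarith) hxy))

lemma log_div_loglog_rpow_le {s q y : ℝ} (hs : 0 ≤ s) (hq : 1 ≤ q) (hqy : q ≤ y)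
    (hyq : y ≤ q ^ 2) : log y / loglog y ^ s ≤ 2 * log q / loglog q ^ s := by
  have hlog : log y ≤ 2 * log q := by
    calc log y ≤ log (q ^ 2) := log_le_log (by linarith) hyq
      _ = 2 * log q := by rw [log_pow]; norm_num
  have hpos : 0 < loglog q ^ s := rpow_pos_of_pos (by linarith [one_le_loglog q]) s
  exact div_le_div₀ (by linarith [log_nonneg hq]) hlog hpos
    (rpow_le_rpow (by linarith [one_le_loglog q]) (loglog_le_loglog hq hqy) hs)

lemma length_primeFactorsList_mul_prime {p q : ℕ} (hp : p.Prime) (hq : q.Prime) :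
    (p * q).primeFactorsList.length = 2 := by
  rw [← ArithmeticFunction.cardFactors_apply, ArithmeticFunction.cardFactors_mul hp.ne_zero
    hq.ne_zero, ArithmeticFunction.cardFactors_apply_prime hp,
    ArithmeticFunction.cardFactors_apply_prime hq]

lemma hardyNormSq_indicator {A : Finset ℕ} (hA : 0 ∉ A) :
    hardyNormSq ((A : Set ℕ).indicator 1) = #A := by
  rw [hardyNormSq, tsum_eq_sum (s := A) fun n hn => by simp [hn]]
  rw [sum_congr rfl fun n hn => ?_, sum_const, nsmul_one]
  rw [if_pos (Nat.one_le_iff_ne_zero.2 (ne_of_mem_of_not_mem hn hA)),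
    Set.indicator_of_mem (mem_coe.2 hn)]
  simp

lemma twoHomogeneousWeight_indicator_le {s w : ℝ} {B : Finset ℕ}
    (hw : ∀ n ∈ B, log n / loglog n ^ s ≤ w) :
    twoHomogeneousWeight s ((B : Set ℕ).indicator 1) ≤ #B * ENNReal.ofReal w := by
  rw [twoHomogeneousWeight, tsum_eq_sum (s := B) fun n hn => by simp [hn]]
  calc _ ≤ ∑ n ∈ B, ENNReal.ofReal w := sum_le_sum fun n hn => by
          split_ifs
          · simpa [Set.indicator_of_mem (mem_coe.2 hn)] using ENNReal.ofReal_le_ofReal (hw n hn)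
          · exact zero_le
    _ = _ := by rw [sum_const, nsmul_eq_mul]

lemma volterraSum_indicator (A B : Finset ℕ) (N : ℕ) :
    volterraSum ((B : Set ℕ).indicator 1) ((A : Set ℕ).indicator 1) N =
      ((∑ d ∈ N.divisors with d.primeFactorsList.length = 2 ∧ d ∈ B ∧ N / d ∈ A, log d : ℝ) :
        ℂ) := by
  rw [volterraSum, ← filter_filter, Complex.ofReal_sum,
    sum_filter (fun d => d ∈ B ∧ N / d ∈ A)]
  refine sum_congr rfl fun d _ => ?_
  by_cases hB : d ∈ B <;> by_cases hA : N / d ∈ A <;> simp [hA, hB]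

lemma sum_log_le_norm_volterraSum {A B T : Finset ℕ} {N : ℕ} (hN : N ≠ 0)
    (hT : ∀ d ∈ T, d ∣ N ∧ d.primeFactorsList.length = 2 ∧ d ∈ B ∧ N / d ∈ A) :
    ∑ d ∈ T, log d ≤ ‖volterraSum ((B : Set ℕ).indicator 1) ((A : Set ℕ).indicator 1) N‖ := by
  rw [volterraSum_indicator, Complex.norm_real,
    norm_of_nonneg (sum_nonneg fun d _ => log_natCast_nonneg d)]
  refine sum_le_sum_of_subset_of_nonneg (fun d hd => ?_) fun d _ _ => log_natCast_nonneg d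
  obtain ⟨hdN, hd⟩ := hT d hd
  exact mem_filter.2 ⟨Nat.mem_divisors.2 ⟨hdN, hN⟩, hd⟩

lemma card_mul_le_volterraNormSq {b a : ℕ → ℂ} {c : ℝ} (S : Finset ℕ)
    (hS : ∀ N ∈ S, 2 ≤ N ∧ c ≤ ‖volterraSum b a N‖ ^ 2 / log N ^ 2) :
    #S * ENNReal.ofReal c ≤ volterraNormSq b a := by
  calc #S * ENNReal.ofReal c = #S • ENNReal.ofReal c := (nsmul_eq_mul _ _).symm
    _ ≤ ∑ N ∈ S, _ := card_nsmul_le_sum _ _ _ fun N hN => by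
          rw [if_pos (hS N hN).1]
          exact ENNReal.ofReal_le_ofReal (hS N hN).2
    _ ≤ volterraNormSq b a := ENNReal.sum_le_tsum S

def subsetProds (P : Finset ℕ) (k : ℕ) : Finset ℕ :=
  (P.powersetCard k).image fun S => ∏ p ∈ S, p

section SubsetProds

variable {P : Finset ℕ} {k : ℕ}

lemma card_subsetProds (hP : ∀ p ∈ P, p.Prime) :
    #(subsetProds P k) = (#P).choose k := by
  rw [subsetProds, card_image_of_injOn, card_powersetCard]
  intro S hS T hT h
  rw [← Nat.primeFactors_prod fun p hp => hP p ((mem_powersetCard.1 hS).1 hp),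
    ← Nat.primeFactors_prod fun p hp => hP p ((mem_powersetCard.1 hT).1 hp)]
  exact congrArg Nat.primeFactors h

lemma pos_of_mem_subsetProds (hP : ∀ p ∈ P, p.Prime) {m : ℕ} (hm : m ∈ subsetProds P k) :
    0 < m := by
  obtain ⟨S, hS, rfl⟩ := mem_image.1 hm
  exact prod_pos fun p hp => (hP p ((mem_powersetCard.1 hS).1 hp)).pos

lemma prod_erase_mem_subsetProds {S : Finset ℕ} (hS : S ∈ P.powersetCard (k + 1)) {p : ℕ}
    (hp : p ∈ S) : ∏ r ∈ S.erase p, r ∈ subsetProds P k := by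
  obtain ⟨hSP, hScard⟩ := mem_powersetCard.1 hS
  refine mem_image.2 ⟨S.erase p, mem_powersetCard.2 ⟨(erase_subset p S).trans hSP, ?_⟩, rfl⟩
  rw [card_erase_of_mem hp, hScard, Nat.add_sub_cancel]

end SubsetProds

section TestPair

variable {P : Finset ℕ} {k q : ℕ}

lemma half_sq_le_volterraTerm (hP : ∀ p ∈ P, p.Prime) (hq : q.Prime) {S : Finset ℕ}
    (hS : S ∈ P.powersetCard (k + 1)) (hSq : ∏ p ∈ S, p ≤ q) :
    (((k : ℝ) + 1) / 2) ^ 2 ≤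
      ‖volterraSum ((↑(P.image (· * q)) : Set ℕ).indicator 1)
          ((↑(subsetProds P k) : Set ℕ).indicator 1) (q * ∏ p ∈ S, p)‖ ^ 2 /
        log ↑(q * ∏ p ∈ S, p) ^ 2 := by
  obtain ⟨hSP, hScard⟩ := mem_powersetCard.1 hS
  set M := ∏ p ∈ S, p with hMdef
  have hM : 0 < M := prod_pos fun p hp => (hP p (hSP hp)).pos
  have hq0 : (0 : ℝ) < q := by exact_mod_cast hq.pos
  have hsum : ((k : ℝ) + 1) * log q ≤ ‖volterraSum ((↑(P.image (· * q)) : Set ℕ).indicator 1)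
      ((↑(subsetProds P k) : Set ℕ).indicator 1) (q * M)‖ := by
    calc ((k : ℝ) + 1) * log q = ∑ p ∈ S, log q := by simp [hScard]
      _ ≤ ∑ p ∈ S, log ↑(p * q) := sum_le_sum fun p hp => log_le_log hq0
          (by exact_mod_cast Nat.le_mul_of_pos_left q (hP p (hSP hp)).pos)
      _ = ∑ d ∈ S.image (· * q), log d :=
          (sum_image (f := fun d : ℕ => log (d : ℝ))
            fun _ _ _ _ h => Nat.eq_of_mul_eq_mul_right hq.pos h).symm
      _ ≤ _ := sum_log_le_norm_volterraSum (Nat.mul_pos hq.pos hM).ne' fun d hd => ?_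
    obtain ⟨p, hp, rfl⟩ := mem_image.1 hd
    have hsplit : q * M = p * q * ∏ r ∈ S.erase p, r := by
      rw [hMdef, ← mul_prod_erase S (fun r => r) hp]; ring
    refine ⟨Dvd.intro _ hsplit.symm, length_primeFactorsList_mul_prime (hP p (hSP hp)) hq,
      mem_image_of_mem _ (hSP hp), ?_⟩
    rw [hsplit, Nat.mul_div_cancel_left _ (Nat.mul_pos (hP p (hSP hp)).pos hq.pos)]
    exact prod_erase_mem_subsetProds hS hp
  have hlog : log ↑(q * M) ≤ 2 * log q := by
    calc log ↑(q * M) ≤ log ((q : ℝ) ^ 2) :=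
          log_le_log (by exact_mod_cast Nat.mul_pos hq.pos hM)
            (by rw [sq]; exact_mod_cast Nat.mul_le_mul_left q hSq)
      _ = 2 * log q := by rw [log_pow]; norm_num
  have hlogpos : 0 < log ↑(q * M) :=
    log_pos (by exact_mod_cast hq.one_lt.trans_le (Nat.le_mul_of_pos_right q hM))
  rw [← div_pow]
  refine pow_le_pow_left₀ (by positivity) ?_ 2
  rw [le_div_iff₀ hlogpos]
  nlinarith

lemma choose_mul_le_volterraNormSq (hP : ∀ p ∈ P, p.Prime) {x : ℕ} (hPx : ∀ p ∈ P, p ≤ x)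
    (hq : q.Prime) (hxq : x ^ (k + 1) ≤ q) :
    ENNReal.ofReal ((#P).choose (k + 1) * (((k : ℝ) + 1) / 2) ^ 2) ≤
      volterraNormSq ((↑(P.image (· * q)) : Set ℕ).indicator 1)
        ((↑(subsetProds P k) : Set ℕ).indicator 1) := by
  have hcard : #((subsetProds P (k + 1)).image (q * ·)) = (#P).choose (k + 1) := by
    rw [card_image_of_injective _ (mul_right_injective₀ hq.ne_zero), card_subsetProds hP]
  rw [ENNReal.ofReal_mul (by positivity), ENNReal.ofReal_natCast, ← hcard]
  refine card_mul_le_volterraNormSq _ fun N hN => ?_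
  obtain ⟨M, hM, rfl⟩ := mem_image.1 hN
  obtain ⟨S, hS, rfl⟩ := mem_image.1 hM
  obtain ⟨hSP, hScard⟩ := mem_powersetCard.1 hS
  have hSq : ∏ p ∈ S, p ≤ q := by
    calc ∏ p ∈ S, p ≤ x ^ #S := prod_le_pow_card S _ x fun p hp => hPx p (hSP hp)
      _ ≤ q := by rwa [hScard]
  exact ⟨hq.two_le.trans (Nat.le_mul_of_pos_right q (pos_of_mem_subsetProds hP hM)),
    half_sq_le_volterraTerm hP hq hS hSq⟩

lemma twoHomogeneousWeight_le {s : ℝ} (hs : 0 ≤ s) (hPq : ∀ p ∈ P, 1 ≤ p ∧ p ≤ q) :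
    twoHomogeneousWeight s ((↑(P.image (· * q)) : Set ℕ).indicator 1) ≤
      ENNReal.ofReal (#P * (2 * log q / loglog q ^ s)) := by
  refine (twoHomogeneousWeight_indicator_le (w := 2 * log q / loglog q ^ s)
    fun n hn => ?_).trans ?_
  · obtain ⟨p, hp, rfl⟩ := mem_image.1 hn
    obtain ⟨hp1, hpq⟩ := hPq p hp
    refine log_div_loglog_rpow_le hs (by exact_mod_cast hp1.trans hpq) ?_ ?_
    · exact_mod_cast Nat.le_mul_of_pos_left q hp1
    · rw [sq]; exact_mod_cast Nat.mul_le_mul_right q hpq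
  · rw [ENNReal.ofReal_mul (by positivity), ENNReal.ofReal_natCast]
    exact mul_le_mul_left (by exact_mod_cast card_image_le) _

end TestPair

lemma mul_choose_lt_choose_succ_mul {n k : ℕ} (hk : 2 * k ≤ n) (hkn : k < n) {C L W : ℝ}
    (hW : 0 < W) (h : 16 * C * L < (k + 1) * W) :
    C * (n * (2 * L / W)) * n.choose k < n.choose (k + 1) * (((k : ℝ) + 1) / 2) ^ 2 := by
  have hch : (n.choose (k + 1) : ℝ) * (k + 1) = n.choose k * (n - k) := by
    rw [← Nat.cast_sub hkn.le]; exact_mod_cast Nat.choose_succ_right_eq n k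
  have hpos : (0 : ℝ) < n.choose k * n := by
    have := Nat.choose_pos hkn.le
    have : 0 < n := by omega
    positivity
  have hL : 2 * C * L / W < (k + 1) / 8 := by rw [div_lt_iff₀ hW]; linarith
  have hn : (n : ℝ) ≤ 2 * (n - k) := by
    have : (2 * k : ℝ) ≤ n := by exact_mod_cast hk
    linarith
  calc C * (n * (2 * L / W)) * n.choose k = n.choose k * n * (2 * C * L / W) := by ring
    _ < n.choose k * n * ((k + 1) / 8) := mul_lt_mul_of_pos_left hL hpos
    _ ≤ n.choose k * (n - k) * (k + 1) / 4 := by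
        have := Nat.choose_pos hkn.le
        have : (0 : ℝ) ≤ n.choose k * (k + 1) := by positivity
        nlinarith [mul_le_mul_of_nonneg_left hn this]
    _ = n.choose (k + 1) * (((k : ℝ) + 1) / 2) ^ 2 := by rw [← hch]; ring

theorem ofReal_mul_lt_volterraNormSq {P : Finset ℕ} {x k q : ℕ} {s C : ℝ}
    (hP : ∀ p ∈ P, p.Prime) (hPx : ∀ p ∈ P, p ≤ x) (hq : q.Prime) (hxq : x ^ (k + 1) < q)
    (hk : 2 * k ≤ #P) (hkP : k < #P) (hs : 0 ≤ s)
    (h : 16 * C * log q < (k + 1) * loglog q ^ s) :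
    ENNReal.ofReal C * twoHomogeneousWeight s ((↑(P.image (· * q)) : Set ℕ).indicator 1) *
        hardyNormSq ((↑(subsetProds P k) : Set ℕ).indicator 1) <
      volterraNormSq ((↑(P.image (· * q)) : Set ℕ).indicator 1)
        ((↑(subsetProds P k) : Set ℕ).indicator 1) := by
  have hPq : ∀ p ∈ P, 1 ≤ p ∧ p ≤ q := fun p hp =>
    ⟨(hP p hp).one_le, (hPx p hp).trans ((Nat.le_self_pow (by omega) x).trans hxq.le)⟩
  have h0 : 0 ∉ subsetProds P k := fun h0 => (pos_of_mem_subsetProds hP h0).false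
  have hW : 0 < loglog q ^ s := rpow_pos_of_pos (by linarith [one_le_loglog q]) s
  calc _ ≤ ENNReal.ofReal C * ENNReal.ofReal (#P * (2 * log q / loglog q ^ s)) *
        ENNReal.ofReal ((#P).choose k) := by
        rw [hardyNormSq_indicator h0, card_subsetProds hP, ENNReal.ofReal_natCast]
        gcongr
        exact twoHomogeneousWeight_le hs hPq
    _ = ENNReal.ofReal (C * (#P * (2 * log q / loglog q ^ s)) * (#P).choose k) := by
        rw [← ENNReal.ofReal_mul' (by have := log_natCast_nonneg q; positivity),
          ← ENNReal.ofReal_mul' (by positivity)]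
    _ < ENNReal.ofReal ((#P).choose (k + 1) * (((k : ℝ) + 1) / 2) ^ 2) :=
        (ENNReal.ofReal_lt_ofReal_iff
          (by have := Nat.choose_pos (Nat.succ_le_of_lt hkP); positivity)).2
          (mul_choose_lt_choose_succ_mul hk hkP hW h)
    _ ≤ _ := choose_mul_le_volterraNormSq hP hPx hq hxq.le

lemma eventually_sqrt_le_primeCounting : ∀ᶠ n : ℕ in atTop, √(n : ℝ) ≤ n.primeCounting := by
  have hsqrt : ∀ᶠ y : ℝ in atTop, log y ≤ √y / 4 := by
    filter_upwards [(isLittleO_log_rpow_atTop (r := 1 / 2) (by norm_num)).bound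
      (c := 1 / 4) (by norm_num), eventually_ge_atTop 1] with y hy hy1
    rw [norm_of_nonneg (log_nonneg hy1), norm_of_nonneg (by positivity), ← sqrt_eq_rpow] at hy
    linarith
  have hlin : ∀ᶠ y : ℝ in atTop, log y ≤ y / 8 := by
    filter_upwards [isLittleO_log_id_atTop.bound (c := 1 / 8) (by norm_num),
      eventually_ge_atTop 1] with y hy hy1
    rw [norm_of_nonneg (log_nonneg hy1), id, norm_of_nonneg (by linarith)] at hy
    linarith
  have hcast := tendsto_natCast_atTop_atTop (R := ℝ)
  filter_upwards [hcast.eventually hsqrt,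
    (tendsto_atTop_add_const_right _ 1 hcast).eventually hlin, eventually_ge_atTop 2]
    with n hn hn1 hn2
  have hlogpos : 0 < log n := log_pos (by exact_mod_cast hn2)
  have hn0 : (0 : ℝ) ≤ n := n.cast_nonneg
  refine le_trans ?_ (Chebyshev.pi_ge n)
  rw [le_div_iff₀ hlogpos]
  have h1 : √(n : ℝ) * log n ≤ n / 4 := by
    nlinarith [mul_le_mul_of_nonneg_left hn (sqrt_nonneg (n : ℝ)), mul_self_sqrt hn0]
  have h2 : (2 : ℝ) ≤ n := by exact_mod_cast hn2
  nlinarith [mul_le_mul_of_nonneg_left log_two_gt_d9.le hn0]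

lemma eventually_mul_lt_rpow {ε : ℝ} (hε : 0 < ε) (c : ℝ) {a : ℝ} (ha : 0 < a) :
    ∀ᶠ y : ℝ in atTop, c * y < (a * y) ^ (1 + ε) := by
  have hpow := (tendsto_rpow_atTop hε).comp (tendsto_id.const_mul_atTop ha)
  filter_upwards [hpow.eventually_gt_atTop (c / a), eventually_gt_atTop 0] with y hy hy0
  have hay : 0 < a * y := mul_pos ha hy0
  rw [rpow_add hay, rpow_one]
  calc c * y = a * y * (c / a) := by field_simp
    _ < a * y * (a * y) ^ ε := mul_lt_mul_of_pos_left hy hay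

lemma exists_log_rpow_primeCounting_gt {ε : ℝ} (hε : 0 < ε) (c : ℝ) :
    ∃ x : ℕ, 3 ≤ x ∧ 0 < x.primeCounting ∧
      c * log x < log ((x.primeCounting / 2 : ℕ) + 1) ^ (1 + ε) := by
  have hlog := tendsto_log_atTop.comp (tendsto_natCast_atTop_atTop (R := ℝ))
  obtain ⟨x, hsqrt, hc, hx⟩ := (eventually_sqrt_le_primeCounting.and
    ((hlog.eventually (eventually_mul_lt_rpow hε c (a := 1 / 4) (by norm_num))).and
      (eventually_ge_atTop 16))).exists
  set n := x.primeCounting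
  simp only [Function.comp_apply] at hc
  have hx0 : (0 : ℝ) < x := by positivity
  have hsqrt4 : (4 : ℝ) ≤ √x := by
    rw [show (4 : ℝ) = √16 by rw [show (16 : ℝ) = 4 ^ 2 by norm_num, sqrt_sq (by norm_num)]]
    exact sqrt_le_sqrt (by exact_mod_cast hx)
  have hhalf : √x / 2 ≤ ((n / 2 : ℕ) : ℝ) + 1 := by
    have : n ≤ 2 * (n / 2) + 1 := by omega
    have : (n : ℝ) ≤ 2 * (n / 2 : ℕ) + 1 := by exact_mod_cast this
    linarith
  have hlog16 : log 16 ≤ log x := log_le_log (by norm_num) (by exact_mod_cast hx)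
  have hquarter : 1 / 4 * log x ≤ log ((n / 2 : ℕ) + 1) := by
    calc 1 / 4 * log x ≤ log x / 2 - log 2 := by
          rw [show (16 : ℝ) = 2 ^ 4 by norm_num, log_pow] at hlog16
          push_cast at hlog16
          linarith
      _ = log (√x / 2) := by rw [log_div (by positivity) (by norm_num), log_sqrt hx0.le]
      _ ≤ _ := log_le_log (by positivity) hhalf
  refine ⟨x, by omega, ?_, hc.trans_le ?_⟩
  · have : (0 : ℝ) < n := by linarith
    exact_mod_cast this
  · exact rpow_le_rpow (by positivity) hquarter (by linarith)

lemma sixteen_mul_log_lt_mul_loglog_rpow {C s : ℝ} {x k q : ℕ} (hC : 0 ≤ C) (hs : 0 ≤ s)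
    (hx : 3 ≤ x) (hxq : x ^ (k + 1) < q) (hq : q ≤ 2 * x ^ (k + 1))
    (h : 32 * C * log x < log ((k : ℝ) + 1) ^ s) :
    16 * C * log q < (k + 1) * loglog q ^ s := by
  have hx0 : (0 : ℝ) < x := by positivity
  have hlogx : 1 ≤ log x := by
    rw [le_log_iff_exp_le hx0]
    linarith [exp_one_lt_d9, (show (3 : ℝ) ≤ x by exact_mod_cast hx)]
  have hlo : (k + 1) * log x < log q := by
    have := log_lt_log (pow_pos hx0 _) (show (x : ℝ) ^ (k + 1) < q by exact_mod_cast hxq)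
    rwa [log_pow, Nat.cast_add_one] at this
  have hhi : log q ≤ 2 * ((k + 1) * log x) := by
    have := log_le_log (by exact_mod_cast Nat.zero_lt_of_lt hxq)
      (show (q : ℝ) ≤ 2 * x ^ (k + 1) by exact_mod_cast hq)
    rw [log_mul (by norm_num) (by positivity), log_pow, Nat.cast_add_one] at this
    have : log 2 ≤ 1 := by linarith [log_le_sub_one_of_pos (show (0 : ℝ) < 2 by norm_num)]
    nlinarith
  have hk0 : (0 : ℝ) < k + 1 := by positivity
  have hloglog : log ((k : ℝ) + 1) ≤ loglog q := by
    calc log ((k : ℝ) + 1) ≤ log ((k + 1) * log x) := log_le_log hk0 (by nlinarith)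
      _ ≤ log (log q) := log_le_log (by positivity) hlo.le
      _ ≤ loglog q := le_max_right _ _
  calc 16 * C * log q ≤ (k + 1) * (32 * C * log x) := by nlinarith
    _ < (k + 1) * log ((k : ℝ) + 1) ^ s := mul_lt_mul_of_pos_left h hk0
    _ ≤ (k + 1) * loglog q ^ s := by
        gcongr
        exact log_nonneg (by linarith [k.cast_nonneg (α := ℝ)])

/-- sharpness of the weight `(log n)/log₂ n` for 2-homogeneous symbols:
for every `ε > 0` and `C > 0` there are a finitely supported 2-homogeneous coefficient
sequence `b` and a finitely supported sequence `a` (not identically zero) with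
`∑_{N≥2} (log N)^{-2}|∑_{k∣N, Ω(k)=2} b_k (log k) a_{N/k}|²
  > C (∑_{Ω(n)=2} |b_n|² (log n)/(log₂ n)^{1+ε}) ∑_{n≥1}|a_n|²`. -/
theorem volterra_two_homogeneous_sharp (ε : ℝ) (hε : 0 < ε) (C : ℝ) (hC : 0 < C) :
    ∃ b a : ℕ → ℂ,
      (Function.support b).Finite ∧ (∀ n, b n ≠ 0 → n.primeFactorsList.length = 2) ∧
      (Function.support a).Finite ∧ (∃ n, 1 ≤ n ∧ a n ≠ 0) ∧
      ENNReal.ofReal C *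
          (∑' n : ℕ, (if n.primeFactorsList.length = 2 then
              ENNReal.ofReal (‖b n‖ ^ 2 * Real.log n / loglog n ^ (1 + ε)) else 0)) *
          (∑' n : ℕ, (if 1 ≤ n then ENNReal.ofReal (‖a n‖ ^ 2) else 0))
        < ∑' N : ℕ, (if 2 ≤ N then
            ENNReal.ofReal
              (‖∑ k ∈ N.divisors.filter (fun k => k.primeFactorsList.length = 2),
                  b k * (Real.log k : ℂ) * a (N / k)‖ ^ 2 / Real.log N ^ 2)
          else 0) := by
  obtain ⟨x, hx, hπ, hgrowth⟩ := exists_log_rpow_primeCounting_gt hε (32 * C)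
  set k := x.primeCounting / 2
  obtain ⟨q, hq, hxq, hq2⟩ := Nat.exists_prime_lt_and_le_two_mul (x ^ (k + 1)) (by positivity)
  have hP : ∀ p ∈ x.primesLE, p.Prime := fun p hp => Nat.prime_of_mem_primesLE hp
  have hcard := Nat.primesLE_card_eq_primeCounting x
  refine ⟨(↑(x.primesLE.image (· * q)) : Set ℕ).indicator 1,
    (↑(subsetProds x.primesLE k) : Set ℕ).indicator 1,
    (finite_toSet _).subset Set.support_indicator_subset, fun n hn => ?_,
    (finite_toSet _).subset Set.support_indicator_subset, ?_,
    ofReal_mul_lt_volterraNormSq hP (fun p hp => Nat.le_of_mem_primesLE hp) hq hxq (by omega)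
      (by omega) (by linarith)
      (sixteen_mul_log_lt_mul_loglog_rpow hC.le (by linarith) hx hxq hq2 hgrowth)⟩
  · obtain ⟨p, hp, rfl⟩ := mem_image.1 (Set.mem_of_indicator_ne_zero hn)
    exact length_primeFactorsList_mul_prime (hP p hp) hq
  · obtain ⟨m, hm⟩ : (subsetProds x.primesLE k).Nonempty :=
      (powersetCard_nonempty.2 (by omega)).image _
    exact ⟨m, pos_of_mem_subsetProds hP hm, by simp [hm]⟩
end

section
/- For every integer m ≥ 3, the weight n^{(m−2)/m}/(log n)^{m−2} for m-homogeneous symbols is sharp in the following sense: for every ε > 0 and every C > 0 there exist a finitely supported complex sequence (b_n)_{n≥2} supported on the integers n with Ω(n) = m and a finitely supported complex sequence (a_n)_{n≥1}, not identically zero, such that ∑_{N≥2} (log N)^{-2} |∑_{k∣N, Ω(k)=m} b_k (log k) a_{N/k}|² > C · (∑_{Ω(n)=m} |b_n|² n^{(m−2)/m}/(log n)^{m−2+ε}) · ∑_{n≥1} |a_n|². -/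
open scoped ENNReal

/-!
Let `P` be the set of primes in `(√x, x]`, so `R := #P ≥ x / (4 log x)` by Chebyshev's bound. Take
for `b` the indicator of the products of `m` primes of `P` and for `a` the indicator of all products
of distinct primes of `P`. Then `‖a‖² = 2^R`, and since such an `m`-fold product `n` satisfies
`n ≤ x^m` and `log n ≥ m log x / 2`, the weighted norm of `b` is at most
`C(R, m) x^{m-2} / (m log x / 2)^{m-2+ε}`. For each of the at least `2^{R-1}` sets `S ⊆ P` with
`#S ≥ R / 2`, the inner sum at `N = ∏ S` equals `∑_{T ⊆ S, #T = m} log ∏ T ≥ C(R/2, m) m log x / 2`,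
while `log N ≤ R log x`. The ratio of the right-hand side to the left-hand side is therefore of
order `(R log x / x)^{m-2} (log x)^ε ≥ 4^{2-m} (log x)^ε` (up to a factor depending only on `m`),
which exceeds any `C` for large `x`.
-/

open Finset Real Filter Asymptotics
open scoped Nat

def primesAboveSqrt (x : ℕ) : Finset ℕ := {p ∈ Ioc (Nat.sqrt x) x | p.Prime}

lemma primeCounting_le_card_primesAboveSqrt_add (x : ℕ) :
    Nat.primeCounting x ≤ #(primesAboveSqrt x) + (Nat.sqrt x + 1) := by
  rw [← Nat.primesLE_card_eq_primeCounting, ← card_range (Nat.sqrt x + 1)]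
  refine (card_le_card fun p hp => ?_).trans (card_union_le _ _)
  rw [Nat.mem_primesLE] at hp
  by_cases h : p ≤ Nat.sqrt x
  · exact mem_union_right _ (mem_range.2 (Nat.lt_succ_of_le h))
  · exact mem_union_left _ (mem_filter.2 ⟨mem_Ioc.2 ⟨not_le.1 h, hp.1⟩, hp.2⟩)

lemma half_log_le_log_of_mem_primesAboveSqrt {x p : ℕ} (hp : p ∈ primesAboveSqrt x) :
    log x / 2 ≤ log p := by
  obtain ⟨⟨hsqrt, hpx⟩, hprime⟩ := by simpa [primesAboveSqrt] using hp
  have hx : x ≤ p ^ 2 := (Nat.lt_succ_sqrt' x).le.trans (Nat.pow_le_pow_left hsqrt 2)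
  have hx0 : (0 : ℝ) < x := by exact_mod_cast (hprime.pos.trans_le hpx)
  have := log_le_log hx0 (by exact_mod_cast hx : (x : ℝ) ≤ ((p ^ 2 : ℕ) : ℝ))
  rw [Nat.cast_pow, log_pow] at this
  push_cast at this
  linarith

lemma eventually_log_le_mul_sqrt (c : ℝ) (hc : 0 < c) : ∀ᶠ y : ℝ in atTop, log y ≤ c * √y := by
  filter_upwards [(isLittleO_log_rpow_atTop one_half_pos).def hc, eventually_ge_atTop 1]
    with y hy hy1
  rwa [norm_of_nonneg (log_nonneg hy1), norm_of_nonneg (by positivity), ← sqrt_eq_rpow] at hy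

lemma eventually_div_four_log_le_card_primesAboveSqrt :
    ∀ᶠ x : ℕ in atTop, (x : ℝ) / (4 * log x) ≤ #(primesAboveSqrt x) := by
  filter_upwards [tendsto_natCast_atTop_atTop.eventually (eventually_log_le_mul_sqrt (1 / 12)
    (by norm_num)), eventually_ge_atTop 2] with x hlog hx
  have hx' : (2 : ℝ) ≤ x := by exact_mod_cast hx
  have hlogx : 0 < log x := log_pos (by linarith)
  have hsqrt : (1 : ℝ) ≤ √x := by rw [one_le_sqrt]; linarith
  have hlog2 := log_two_gt_d9
  have hsucc : log (x + 1) ≤ 2 * log x := by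
    rw [← log_rpow (by linarith)]
    exact log_le_log (by positivity) (by norm_num; nlinarith)
  have hcount : ((Nat.primeCounting x : ℕ) : ℝ) ≤ #(primesAboveSqrt x) + (√x + 1) := by
    have h := primeCounting_le_card_primesAboveSqrt_add x
    have hs : ((Nat.sqrt x : ℕ) : ℝ) ≤ √x := Real.nat_sqrt_le_real_sqrt
    have h' : ((Nat.primeCounting x : ℕ) : ℝ) ≤
        ((#(primesAboveSqrt x) + (Nat.sqrt x + 1) : ℕ) : ℝ) := by exact_mod_cast h
    push_cast at h'
    linarith
  have hpi := Chebyshev.pi_ge x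
  rw [div_le_iff₀ hlogx] at hpi
  rw [div_le_iff₀ (by positivity)]
  -- as `log x ≤ √x / 12`, the losses `log (x + 1) + (√x + 1) log x` in Chebyshev's bound
  -- stay below `x / 3 < (log 2 - 1 / 4) x`
  nlinarith [mul_le_mul_of_nonneg_right hcount hlogx.le,
    mul_le_mul_of_nonneg_left hlog (sqrt_nonneg (x : ℝ)), mul_self_sqrt (by linarith : (0 : ℝ) ≤ x)]

lemma exists_log_pos_many_primesAboveSqrt (M : ℕ) (K : ℝ) {ε : ℝ} (hε : 0 < ε) :
    ∃ x : ℕ, 0 < log x ∧ M ≤ #(primesAboveSqrt x) ∧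
      x ≤ 4 * #(primesAboveSqrt x) * log x ∧ K < log x ^ ε := by
  have hlog : Tendsto (fun x : ℕ => log x) atTop atTop :=
    tendsto_log_atTop.comp tendsto_natCast_atTop_atTop
  have hsmall : ∀ᶠ x : ℕ in atTop, 4 * M * log x ≤ x := by
    filter_upwards [tendsto_natCast_atTop_atTop.eventually ((isLittleO_log_id_atTop.def
      (by positivity : (0 : ℝ) < 1 / (4 * M + 1))))] with x hx
    rw [norm_of_nonneg (log_natCast_nonneg x), id, norm_of_nonneg (Nat.cast_nonneg x),
      one_div_mul_eq_div, le_div_iff₀ (by positivity)] at hx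
    nlinarith [log_natCast_nonneg x]
  obtain ⟨x, hx2, hcard, hxM, hK⟩ := ((eventually_ge_atTop 2).and
    (eventually_div_four_log_le_card_primesAboveSqrt.and
    (hsmall.and (((tendsto_rpow_atTop hε).comp hlog).eventually_gt_atTop K)))).exists
  have hlogx : 0 < log x := log_pos (by exact_mod_cast hx2)
  rw [div_le_iff₀ (by positivity)] at hcard
  refine ⟨x, hlogx, ?_, by linarith, hK⟩
  have : (M : ℝ) ≤ #(primesAboveSqrt x) := by nlinarith
  exact_mod_cast this

lemma two_pow_card_le_two_mul_card_filter_half_le {α : Type*} [DecidableEq α] (s : Finset α) :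
    2 ^ #s ≤ 2 * #{t ∈ s.powerset | #s / 2 ≤ #t} := by
  have hcompl : #{t ∈ s.powerset | ¬ #s / 2 ≤ #t} ≤ #{t ∈ s.powerset | #s / 2 ≤ #t} := by
    refine card_le_card_of_injOn (s \ ·) (fun t ht => ?_) fun t ht u hu h => ?_
    · simp only [coe_filter, mem_powerset, Set.mem_ofPred_eq] at ht ⊢
      refine ⟨sdiff_subset, ?_⟩
      rw [card_sdiff_of_subset ht.1]
      omega
    · simp only [coe_filter, mem_powerset, Set.mem_ofPred_eq] at ht hu
      rw [← Finset.sdiff_sdiff_eq_self ht.1, ← Finset.sdiff_sdiff_eq_self hu.1]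
      exact congrArg (s \ ·) h
  have := card_filter_add_card_filter_not (s := s.powerset) (#s / 2 ≤ #·)
  rw [card_powerset] at this
  omega

section ProductsOfPrimes

variable {S : Finset ℕ}

lemma prod_injOn_primes :
    Set.InjOn (fun S : Finset ℕ => ∏ p ∈ S, p) {S | ∀ p ∈ S, p.Prime} := by
  intro S hS T hT h
  rw [← Nat.primeFactors_prod hS, ← Nat.primeFactors_prod hT]
  exact congrArg Nat.primeFactors h

lemma primeFactorsList_length_prod (hS : ∀ p ∈ S, p.Prime) :
    (∏ p ∈ S, p).primeFactorsList.length = #S := by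
  rw [← ArithmeticFunction.cardFactors_apply, ← Finset.prod_map_val,
    ArithmeticFunction.cardFactors_multiset_prod (prod_ne_zero_iff.2 fun p hp => (hS p hp).ne_zero),
    Multiset.map_id', sum_map_val, card_eq_sum_ones]
  exact sum_congr rfl fun p hp => ArithmeticFunction.cardFactors_apply_prime (hS p hp)

lemma image_prod_powersetCard_subset_filter_divisors {m : ℕ} (hS : ∀ p ∈ S, p.Prime) :
    (S.powersetCard m).image (fun T => ∏ p ∈ T, p) ⊆
      (∏ p ∈ S, p).divisors.filter (fun k => k.primeFactorsList.length = m) := by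
  intro k hk
  obtain ⟨T, hT, rfl⟩ := mem_image.1 hk
  obtain ⟨hTS, rfl⟩ := mem_powersetCard.1 hT
  rw [mem_filter, Nat.mem_divisors]
  exact ⟨⟨prod_dvd_prod_of_subset _ _ _ hTS, prod_ne_zero_iff.2 fun p hp => (hS p hp).ne_zero⟩,
    primeFactorsList_length_prod fun p hp => hS p (hTS hp)⟩

lemma card_mul_le_log_prod {lo : ℝ} (hS : ∀ p ∈ S, p.Prime) (hlo : ∀ p ∈ S, lo ≤ log p) :
    #S * lo ≤ log (∏ p ∈ S, p : ℕ) := by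
  rw [Nat.cast_prod, log_prod fun p hp => by exact_mod_cast (hS p hp).ne_zero]
  simpa using card_nsmul_le_sum S _ lo hlo

lemma log_prod_le_card_mul {x : ℕ} (hS : ∀ p ∈ S, p.Prime) (hx : ∀ p ∈ S, p ≤ x) :
    log (∏ p ∈ S, p : ℕ) ≤ #S * log x := by
  rw [← log_pow, ← Nat.cast_pow]
  exact log_le_log (by exact_mod_cast prod_pos fun p hp => (hS p hp).pos)
    (by exact_mod_cast prod_le_pow_card S _ x hx)

end ProductsOfPrimes

/-- `log N` times the `N`-th coefficient of `T_g f` for `g = ∑ b_n n^{-s}` supported on `Ω = m`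
and `f = ∑ a_n n^{-s}`. -/
noncomputable def logConv (m : ℕ) (b a : ℕ → ℂ) (N : ℕ) : ℂ :=
  ∑ k ∈ N.divisors.filter (fun k => k.primeFactorsList.length = m), b k * (log k : ℂ) * a (N / k)

noncomputable def prodIndicator (𝒮 : Finset (Finset ℕ)) : ℕ → ℂ :=
  Set.indicator ↑(𝒮.image fun S => ∏ p ∈ S, p) 1

lemma finite_support_prodIndicator (𝒮 : Finset (Finset ℕ)) :
    (Function.support (prodIndicator 𝒮)).Finite :=
  (finite_toSet _).subset Set.support_indicator_subset

section PrimeProducts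

variable {P : Finset ℕ} {𝒮 : Finset (Finset ℕ)}

lemma prodIndicator_prod_of_mem {S : Finset ℕ} (hS : S ∈ 𝒮) :
    prodIndicator 𝒮 (∏ p ∈ S, p) = 1 :=
  Set.indicator_of_mem (mem_coe.2 (mem_image_of_mem _ hS)) _

lemma prodIndicator_eq_zero {n : ℕ} (hn : n ∉ 𝒮.image fun S => ∏ p ∈ S, p) :
    prodIndicator 𝒮 n = 0 :=
  Set.indicator_of_notMem (by simpa using hn) _

variable (hP : ∀ p ∈ P, p.Prime)
include hP

lemma primeFactorsList_length_of_prodIndicator_powersetCard_ne_zero {m n : ℕ}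
    (hn : prodIndicator (P.powersetCard m) n ≠ 0) : n.primeFactorsList.length = m := by
  obtain ⟨T, hT, rfl⟩ := mem_image.1 (not_imp_comm.1 prodIndicator_eq_zero hn)
  obtain ⟨hTP, hTm⟩ := mem_powersetCard.1 hT
  exact (primeFactorsList_length_prod fun p hp => hP p (hTP hp)).trans hTm

lemma tsum_eq_sum_prod (h𝒮 : ∀ S ∈ 𝒮, S ⊆ P) {F : ℕ → ℝ≥0∞}
    (hF : ∀ n ∉ 𝒮.image fun S => ∏ p ∈ S, p, F n = 0) :
    ∑' n, F n = ∑ S ∈ 𝒮, F (∏ p ∈ S, p) := by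
  rw [tsum_eq_sum hF, sum_image]
  exact prod_injOn_primes.mono fun S hS p hp => hP p (h𝒮 S hS hp)

lemma tsum_sq_norm_prodIndicator_powerset :
    ∑' n : ℕ, (if 1 ≤ n then ENNReal.ofReal (‖prodIndicator P.powerset n‖ ^ 2) else 0) =
      ENNReal.ofReal (2 ^ #P) := by
  rw [tsum_eq_sum_prod hP (fun S => mem_powerset.1) fun n hn => by simp [prodIndicator_eq_zero hn]]
  trans ((#P.powerset : ℕ) : ℝ≥0∞)
  swap; · simp
  rw [card_eq_sum_ones, Nat.cast_sum]
  refine sum_congr rfl fun S hS => ?_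
  have : 1 ≤ ∏ p ∈ S, p :=
    Nat.one_le_iff_ne_zero.2 (prod_ne_zero_iff.2 fun p hp => (hP p (mem_powerset.1 hS hp)).ne_zero)
  simp [this, prodIndicator_prod_of_mem hS]

lemma tsum_weighted_sq_norm_prodIndicator_powersetCard_le {m x : ℕ} {lo α β : ℝ}
    (hm : 0 < m) (hlo0 : 0 < lo) (hα : 0 ≤ α) (hβ : 0 ≤ β)
    (hx : ∀ p ∈ P, p ≤ x) (hlo : ∀ p ∈ P, lo ≤ log p) :
    ∑' n : ℕ, (if n.primeFactorsList.length = m then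
        ENNReal.ofReal (‖prodIndicator (P.powersetCard m) n‖ ^ 2 * (n : ℝ) ^ α / log n ^ β)
      else 0) ≤ ENNReal.ofReal ((#P).choose m * ((x : ℝ) ^ (m * α) / (m * lo) ^ β)) := by
  have hF (n : ℕ) (hn : n ∉ (P.powersetCard m).image fun S => ∏ p ∈ S, p) :
      (if n.primeFactorsList.length = m then ENNReal.ofReal
        (‖prodIndicator (P.powersetCard m) n‖ ^ 2 * (n : ℝ) ^ α / log n ^ β) else 0) = 0 := by
    simp [prodIndicator_eq_zero hn]
  rw [tsum_eq_sum_prod hP (fun T hT => (mem_powersetCard.1 hT).1) hF]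
  rw [ENNReal.ofReal_mul (Nat.cast_nonneg _), ENNReal.ofReal_natCast, ← card_powersetCard,
    ← nsmul_eq_mul, ← sum_const]
  refine sum_le_sum fun T hT => ?_
  obtain ⟨hTP, hTm⟩ := mem_powersetCard.1 hT
  have hTprime : ∀ p ∈ T, p.Prime := fun p hp => hP p (hTP hp)
  rw [if_pos ((primeFactorsList_length_prod hTprime).trans hTm), prodIndicator_prod_of_mem hT,
    norm_one, one_pow, one_mul]
  refine ENNReal.ofReal_le_ofReal (div_le_div₀ (by positivity) ?_ (by positivity) ?_)
  · rw [Real.rpow_mul (Nat.cast_nonneg x), Real.rpow_natCast, ← Nat.cast_pow]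
    refine Real.rpow_le_rpow (Nat.cast_nonneg _) ?_ hα
    exact_mod_cast hTm ▸ prod_le_pow_card T _ x fun p hp => hx p (hTP hp)
  · refine Real.rpow_le_rpow (by positivity) ?_ hβ
    simpa [hTm] using card_mul_le_log_prod hTprime fun p hp => hlo p (hTP hp)

lemma prodIndicator_powersetCard_eq_zero_of_dvd {m k : ℕ} {S : Finset ℕ} (hS : S ⊆ P)
    (hk : k ∣ ∏ p ∈ S, p) (hkS : k ∉ (S.powersetCard m).image fun T => ∏ p ∈ T, p) :
    prodIndicator (P.powersetCard m) k = 0 := by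
  refine prodIndicator_eq_zero ?_
  simp only [mem_image, mem_powersetCard, not_exists, not_and] at hkS ⊢
  rintro T ⟨hTP, hTm⟩ rfl
  refine hkS T ⟨?_, hTm⟩ rfl
  have hSprime : ∀ p ∈ S, p.Prime := fun p hp => hP p (hS hp)
  rw [← Nat.primeFactors_prod fun p hp => hP p (hTP hp), ← Nat.primeFactors_prod hSprime]
  exact Nat.primeFactors_mono hk (prod_ne_zero_iff.2 fun p hp => (hSprime p hp).ne_zero)

lemma logConv_prodIndicator_prod_eq {m : ℕ} {S : Finset ℕ} (hS : S ⊆ P) :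
    logConv m (prodIndicator (P.powersetCard m)) (prodIndicator P.powerset) (∏ p ∈ S, p) =
      ∑ T ∈ S.powersetCard m, ((log (∏ p ∈ T, p : ℕ) : ℝ) : ℂ) := by
  have hprime : ∀ T ⊆ S, ∀ p ∈ T, p.Prime := fun T hT p hp => hP p (hS (hT hp))
  calc _ = ∑ k ∈ (S.powersetCard m).image (fun T => ∏ p ∈ T, p),
        prodIndicator (P.powersetCard m) k * (log k : ℂ) *
          prodIndicator P.powerset ((∏ p ∈ S, p) / k) := by
        refine (sum_subset (image_prod_powersetCard_subset_filter_divisors (hprime S subset_rfl))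
          fun k hk hkS => ?_).symm
        rw [prodIndicator_powersetCard_eq_zero_of_dvd hP hS
          (Nat.dvd_of_mem_divisors (mem_filter.1 hk).1) hkS, zero_mul, zero_mul]
    _ = ∑ T ∈ S.powersetCard m, prodIndicator (P.powersetCard m) (∏ p ∈ T, p) *
          (log (∏ p ∈ T, p : ℕ) : ℂ) * prodIndicator P.powerset ((∏ p ∈ S, p) / ∏ p ∈ T, p) :=
        sum_image fun T hT U hU h => prod_injOn_primes (hprime T (mem_powersetCard.1 hT).1)
          (hprime U (mem_powersetCard.1 hU).1) h
    _ = _ := by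
      refine sum_congr rfl fun T hT => ?_
      obtain ⟨hTS, hTm⟩ := mem_powersetCard.1 hT
      rw [← prod_sdiff hTS, Nat.mul_div_cancel _ (prod_pos fun p hp => (hprime T hTS p hp).pos),
        prodIndicator_prod_of_mem (mem_powersetCard.2 ⟨hTS.trans hS, hTm⟩),
        prodIndicator_prod_of_mem (mem_powerset.2 (sdiff_subset.trans hS)), one_mul, mul_one]

lemma choose_mul_le_norm_logConv_prodIndicator_prod {m : ℕ} {S : Finset ℕ} {lo : ℝ} (hS : S ⊆ P)
    (hlo : ∀ p ∈ P, lo ≤ log p) :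
    (#S).choose m * (m * lo) ≤
      ‖logConv m (prodIndicator (P.powersetCard m)) (prodIndicator P.powerset) (∏ p ∈ S, p)‖ := by
  rw [logConv_prodIndicator_prod_eq hP hS, ← Complex.ofReal_sum,
    Complex.norm_of_nonneg (sum_nonneg fun T _ => log_natCast_nonneg _), ← card_powersetCard,
    ← nsmul_eq_mul]
  refine card_nsmul_le_sum _ _ _ fun T hT => ?_
  obtain ⟨hTS, hTm⟩ := mem_powersetCard.1 hT
  simpa [hTm] using card_mul_le_log_prod (fun p hp => hP p (hTS.trans hS hp))
    fun p hp => hlo p (hTS.trans hS hp)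

lemma ofReal_le_tsum_sq_norm_logConv_prodIndicator {m x : ℕ} {lo : ℝ} (hm : 0 < m) (hlo0 : 0 ≤ lo)
    (hx : ∀ p ∈ P, p ≤ x) (hlo : ∀ p ∈ P, lo ≤ log p) :
    ENNReal.ofReal (2 ^ #P / 2 * (((#P / 2).choose m * (m * lo)) ^ 2 / (#P * log x) ^ 2)) ≤
      ∑' N : ℕ, (if 2 ≤ N then ENNReal.ofReal
        (‖logConv m (prodIndicator (P.powersetCard m)) (prodIndicator P.powerset) N‖ ^ 2 /
          log N ^ 2) else 0) := by
  set G := {S ∈ P.powerset | #P / 2 ≤ #S}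
  set t := ((#P / 2).choose m * (m * lo)) ^ 2 / (#P * log x) ^ 2
  have hprime : ∀ S ∈ G, ∀ p ∈ S, p.Prime :=
    fun S hS p hp => hP p (mem_powerset.1 (mem_filter.1 hS).1 hp)
  set F : ℕ → ℝ≥0∞ := fun N => if 2 ≤ N then ENNReal.ofReal
    (‖logConv m (prodIndicator (P.powersetCard m)) (prodIndicator P.powerset) N‖ ^ 2 / log N ^ 2)
    else 0
  have hterm : ∀ S ∈ G, ENNReal.ofReal t ≤ F (∏ p ∈ S, p) := by
    intro S hS
    obtain ⟨hSP, hSL⟩ := mem_filter.1 hS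
    rw [mem_powerset] at hSP
    rcases S.eq_empty_or_nonempty with rfl | ⟨q, hq⟩
    · simp [t, Nat.choose_eq_zero_of_lt (hSL.trans_lt hm)]
    have h2 : 2 ≤ ∏ p ∈ S, p := (hprime S hS q hq).two_le.trans
      (Nat.le_of_dvd (prod_pos fun p hp => (hprime S hS p hp).pos) (dvd_prod_of_mem _ hq))
    have hlogS : 0 < log (∏ p ∈ S, p : ℕ) := log_pos (by exact_mod_cast h2)
    rw [show F _ = _ from if_pos h2]
    refine ENNReal.ofReal_le_ofReal (div_le_div₀ (by positivity)
      (pow_le_pow_left₀ (by positivity) ?_ 2) (by positivity) (pow_le_pow_left₀ hlogS.le ?_ 2))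
    · refine le_trans ?_ (choose_mul_le_norm_logConv_prodIndicator_prod hP hSP hlo)
      gcongr
    · refine (log_prod_le_card_mul (hprime S hS) fun p hp => hx p (hSP hp)).trans ?_
      gcongr
  calc ENNReal.ofReal (2 ^ #P / 2 * t) ≤ ENNReal.ofReal (#G * t) := by
        refine ENNReal.ofReal_le_ofReal (mul_le_mul_of_nonneg_right ?_ (by positivity))
        rw [div_le_iff₀ two_pos, mul_comm]
        exact_mod_cast two_pow_card_le_two_mul_card_filter_half_le P
    _ = ∑ S ∈ G, ENNReal.ofReal t := by
        rw [sum_const, nsmul_eq_mul, ENNReal.ofReal_mul (Nat.cast_nonneg _), ENNReal.ofReal_natCast]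
    _ ≤ _ := sum_le_sum hterm
    _ = ∑ N ∈ G.image (fun S => ∏ p ∈ S, p), F N :=
        (sum_image fun S hS U hU h => prod_injOn_primes (hprime S hS) (hprime U hU) h).symm
    _ ≤ _ := ENNReal.sum_le_tsum _

end PrimeProducts

lemma pow_div_le_choose_half {m R : ℕ} (hR : 4 * m ≤ R) :
    ((R : ℝ) / 4) ^ m / m ! ≤ (R / 2).choose m := by
  refine le_trans ?_ (Nat.pow_le_choose m (R / 2))
  gcongr
  rw [div_le_iff₀ four_pos]
  exact_mod_cast (by omega : R ≤ (R / 2 + 1 - m) * 4)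

lemma div_rpow_natCast_add_le {k : ℕ} {x y lam D ε : ℝ} (hx0 : 0 ≤ x) (hx : x ≤ y * lam)
    (hlam : 0 < lam) (hD : lam ≤ D) (hε : 0 ≤ ε) :
    x ^ k / D ^ ((k : ℝ) + ε) ≤ y ^ k / lam ^ ε := by
  rw [rpow_add (hlam.trans_le hD), rpow_natCast]
  calc x ^ k / (D ^ k * D ^ ε) ≤ (y * lam) ^ k / (lam ^ k * lam ^ ε) :=
        div_le_div₀ (pow_nonneg (hx0.trans hx) k) (pow_le_pow_left₀ hx0 hx k) (by positivity)
          (mul_le_mul (pow_le_pow_left₀ hlam.le hD k) (rpow_le_rpow hlam.le hD hε) (by positivity)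
            (pow_nonneg (hlam.le.trans hD) k))
    _ = y ^ k / lam ^ ε := by rw [mul_pow]; field_simp

/-- With `C(R, m) ≤ R^m`, `x^{m-2} ≤ (4 R λ)^{m-2}` and `C(R/2, m) ≥ (R/4)^m / m!`, both sides are
of order `R^{2m-2}`; the powers of `4` and `m!` are absorbed by the constant `2 C 64^m m!²`. -/
lemma two_mul_choose_mul_weight_lt {m R : ℕ} {x lam ε C : ℝ} (hm : 2 ≤ m) (hR : 4 * m ≤ R)
    (hlam : 0 < lam) (hε : 0 ≤ ε) (hx0 : 0 ≤ x) (hx : x ≤ 4 * R * lam) (hC : 0 < C)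
    (hK : 2 * C * 64 ^ m * (m ! : ℝ) ^ 2 < lam ^ ε) :
    2 * C * (R.choose m * (x ^ ((m : ℝ) - 2) / (m * (lam / 2)) ^ ((m : ℝ) - 2 + ε))) <
      ((R / 2).choose m * (m * (lam / 2))) ^ 2 / (R * lam) ^ 2 := by
  obtain ⟨k, rfl⟩ : ∃ k, m = k + 2 := ⟨m - 2, by omega⟩
  rw [show ((k + 2 : ℕ) : ℝ) - 2 = k by push_cast; ring, rpow_natCast]
  set D := ((k + 2 : ℕ) : ℝ) * (lam / 2)
  have hR0 : (0 : ℝ) < R := by exact_mod_cast (by omega : 0 < R)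
  have hlamD : lam ≤ D := by simp only [D]; push_cast; nlinarith
  have hRHS : (((R : ℝ) / 4) ^ (k + 2) / (k + 2)! / R) ^ 2 ≤
      ((R / 2).choose (k + 2) * D) ^ 2 / (R * lam) ^ 2 := by
    rw [← div_pow, mul_comm (R : ℝ)]
    refine pow_le_pow_left₀ (by positivity) ?_ 2
    calc ((R : ℝ) / 4) ^ (k + 2) / (k + 2)! / R
        ≤ (R / 2).choose (k + 2) / R := by gcongr; exact pow_div_le_choose_half hR
      _ = (R / 2).choose (k + 2) * lam / (lam * R) := by field_simp
      _ ≤ _ := by gcongr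
  have hconst : 2 * C * 4 ^ k * (4 ^ (k + 2) * (k + 2)!) ^ 2 < lam ^ ε := by
    have h64 : (4 : ℝ) ^ k * (4 ^ (k + 2)) ^ 2 * 16 = 64 ^ (k + 2) := by
      rw [show (64 : ℝ) ^ (k + 2) = 4 ^ (3 * (k + 2)) by rw [pow_mul]; norm_num]; ring
    refine lt_of_le_of_lt ?_ hK
    rw [← h64]
    nlinarith [show (0 : ℝ) < 2 * C * 4 ^ k * (4 ^ (k + 2)) ^ 2 * (k + 2)! ^ 2 by positivity]
  refine lt_of_lt_of_le ?_ hRHS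
  calc 2 * C * ((R.choose (k + 2) : ℝ) * (x ^ k / D ^ ((k : ℝ) + ε)))
      ≤ 2 * C * (R ^ (k + 2) * ((4 * R) ^ k / lam ^ ε)) := by
        refine mul_le_mul_of_nonneg_left (mul_le_mul ?_
          (div_rpow_natCast_add_le hx0 hx hlam hlamD hε) (by positivity) (by positivity))
          (by positivity)
        exact_mod_cast Nat.choose_le_pow R (k + 2)
    _ = 2 * C * 4 ^ k * (R ^ (k + 1)) ^ 2 / lam ^ ε := by ring
    _ < (R ^ (k + 1)) ^ 2 / (4 ^ (k + 2) * (k + 2)!) ^ 2 := by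
        rw [div_lt_div_iff₀ (by positivity) (by positivity)]
        calc 2 * C * 4 ^ k * (R ^ (k + 1)) ^ 2 * (4 ^ (k + 2) * (k + 2)!) ^ 2
            = 2 * C * 4 ^ k * (4 ^ (k + 2) * (k + 2)!) ^ 2 * (R ^ (k + 1)) ^ 2 := by ring
          _ < lam ^ ε * (R ^ (k + 1)) ^ 2 := by gcongr
          _ = _ := by ring
    _ = (((R : ℝ) / 4) ^ (k + 2) / (k + 2)! / R) ^ 2 := by
        rw [div_pow (R : ℝ)]
        field_simp
        ring

/-- sharpness of the weight `n^{(m-2)/m}/(log n)^{m-2}` for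
`m`-homogeneous symbols, `m ≥ 3`: for every `ε > 0` and `C > 0` there are a finitely
supported `m`-homogeneous coefficient sequence `b` and a finitely supported sequence `a`
(not identically zero) such that
`∑_{N≥2} (log N)^{-2}|∑_{k∣N, Ω(k)=m} b_k (log k) a_{N/k}|²
  > C (∑_{Ω(n)=m} |b_n|² n^{(m-2)/m}/(log n)^{m-2+ε}) ∑_{n≥1}|a_n|²`. -/
theorem volterra_m_homogeneous_sharp (m : ℕ) (hm : 3 ≤ m) (ε : ℝ) (hε : 0 < ε)
    (C : ℝ) (hC : 0 < C) :
    ∃ b a : ℕ → ℂ,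
      (Function.support b).Finite ∧ (∀ n, b n ≠ 0 → n.primeFactorsList.length = m) ∧
      (Function.support a).Finite ∧ (∃ n, 1 ≤ n ∧ a n ≠ 0) ∧
      ENNReal.ofReal C *
          (∑' n : ℕ, (if n.primeFactorsList.length = m then
              ENNReal.ofReal
                (‖b n‖ ^ 2 * (n : ℝ) ^ (((m : ℝ) - 2) / m) /
                  Real.log n ^ ((m : ℝ) - 2 + ε))
            else 0)) *
          (∑' n : ℕ, (if 1 ≤ n then ENNReal.ofReal (‖a n‖ ^ 2) else 0))
        < ∑' N : ℕ, (if 2 ≤ N then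
            ENNReal.ofReal
              (‖∑ k ∈ N.divisors.filter (fun k => k.primeFactorsList.length = m),
                  b k * (Real.log k : ℂ) * a (N / k)‖ ^ 2 / Real.log N ^ 2)
          else 0) := by
  obtain ⟨x, hlog, hRm, hxR, hK⟩ :=
    exists_log_pos_many_primesAboveSqrt (4 * m) (2 * C * 64 ^ m * (m ! : ℝ) ^ 2) hε
  set P := primesAboveSqrt x
  have hP : ∀ p ∈ P, p.Prime := fun p hp => (mem_filter.1 hp).2
  have hPx : ∀ p ∈ P, p ≤ x := fun p hp => (mem_Ioc.1 (mem_filter.1 hp).1).2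
  have hlo : ∀ p ∈ P, log x / 2 ≤ log p := fun p hp => half_log_le_log_of_mem_primesAboveSqrt hp
  refine ⟨prodIndicator (P.powersetCard m), prodIndicator P.powerset,
    finite_support_prodIndicator _,
    fun n => primeFactorsList_length_of_prodIndicator_powersetCard_ne_zero hP,
    finite_support_prodIndicator _,
    ⟨1, le_rfl, (prodIndicator_prod_of_mem (empty_mem_powerset P)).trans_ne one_ne_zero⟩, ?_⟩
  have hm' : (3 : ℝ) ≤ m := by exact_mod_cast hm
  have hB := tsum_weighted_sq_norm_prodIndicator_powersetCard_le (m := m) (α := ((m : ℝ) - 2) / m)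
    (β := (m : ℝ) - 2 + ε) hP (by omega) (half_pos hlog) (div_nonneg (by linarith) (by linarith))
    (by linarith) hPx hlo
  rw [show (m : ℝ) * (((m : ℝ) - 2) / m) = m - 2 by field_simp] at hB
  calc _ ≤ _ := mul_le_mul' (mul_le_mul_right hB _) (tsum_sq_norm_prodIndicator_powerset hP).le
    _ = ENNReal.ofReal (C * ((#P).choose m *
          ((x : ℝ) ^ ((m : ℝ) - 2) / (m * (log x / 2)) ^ ((m : ℝ) - 2 + ε))) * 2 ^ #P) := by
        rw [← ENNReal.ofReal_mul hC.le, ← ENNReal.ofReal_mul (by positivity)]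
    _ < _ := by
        rw [ENNReal.ofReal_lt_ofReal_iff_of_nonneg (by positivity)]
        nlinarith [pow_pos (two_pos : (0 : ℝ) < 2) #P, two_mul_choose_mul_weight_lt (by omega) hRm
          hlog (by positivity) (Nat.cast_nonneg x) hxR hC hK]
    _ ≤ _ := ofReal_le_tsum_sq_norm_logConv_prodIndicator hP (by omega) (by positivity) hPx hlo
end

section
/- For every integer m ≥ 3 there exists a constant C_m > 0 such that for every integer n ≥ 2, ∑_{k∣n, Ω(k)=m} k^{2/m − 1} (log k)^m ≤ C_m (log n)², where the sum runs over the divisors k of n having exactly m prime factors counted with multiplicity. -/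
/-!
Put `a = 2 / m` and let `Q` be the set of prime factors of `n`. Writing `k = p₁ ⋯ pₘ` and using
`(∑ log pᵢ) ^ m ≤ m ^ (m - 1) ∑ (log pᵢ) ^ m`, the sum is at most `m ^ m U V ^ (m - 1)` with
`U = ∑_{p ∈ Q} p ^ (a - 1) (log p) ^ m` and `V = ∑_{p ∈ Q} p ^ (a - 1)`.
Since `∑_{p ∈ Q} log p ≤ X := log n`, splitting `Q` at `p ≈ X` and counting the primes of each
dyadic block with Chebyshev's bound gives `U ≪ X ^ a (log X) ^ (m - 1)` and `V ≪ X ^ a / log X`,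
hence `U V ^ (m - 1) ≪ X ^ (a m) = X ^ 2`. Everything is done dyadically: `p` becomes `2 ^ j` with
`j = ⌊log₂ p⌋`, `X` becomes `2 ^ t`, and `X ^ a` becomes `ρ ^ t` with `ρ = 2 ^ a`.
-/

open Finset Real

lemma Finset.sum_piFinset_prod_mul_apply {ι α R : Type*} [Fintype ι] [DecidableEq ι]
    [CommSemiring R] (s : Finset α) (w u : α → R) (i : ι) :
    ∑ g ∈ Fintype.piFinset (fun _ : ι => s), (∏ j, w (g j)) * u (g i) =
      (∑ x ∈ s, w x * u x) * (∑ x ∈ s, w x) ^ (Fintype.card ι - 1) := by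
  have hsplit (g : ι → α) : (∏ j, w (g j)) * u (g i) =
      ∏ j, (if j = i then w (g j) * u (g j) else w (g j)) := by
    rw [Fintype.prod_eq_mul_prod_compl i, Fintype.prod_eq_mul_prod_compl i, if_pos rfl,
      prod_congr rfl fun j hj => if_neg (by simpa using hj)]
    ring
  simp_rw [hsplit, ← prod_univ_sum (fun _ => s) (fun j x => if j = i then w x * u x else w x)]
  rw [Fintype.prod_eq_mul_prod_compl i,
    prod_congr rfl fun j hj => sum_congr rfl fun x _ => if_neg (by simpa using hj)]
  simp only [↓reduceIte, prod_const, card_compl, card_singleton]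

lemma sum_divisors_filter_length_le_sum_piFinset {f : ℕ → ℝ} (hf : ∀ k, 0 ≤ f k) (n m : ℕ) :
    ∑ k ∈ n.divisors.filter (fun k => k.primeFactorsList.length = m), f k ≤
      ∑ g ∈ Fintype.piFinset (fun _ : Fin m => n.primeFactors), f (∏ i, g i) := by
  calc _ ≤ ∑ k ∈ (Fintype.piFinset fun _ : Fin m => n.primeFactors).image (∏ i, · i), f k := by
        refine sum_le_sum_of_subset_of_nonneg (fun k hk => ?_) fun k _ _ => hf k
        obtain ⟨hkn, rfl⟩ := mem_filter.1 hk
        obtain ⟨hkn, hn⟩ := Nat.mem_divisors.1 hkn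
        refine mem_image.2
          ⟨fun i => k.primeFactorsList[(i : ℕ)], Fintype.mem_piFinset.2 fun i => ?_, ?_⟩
        · have hp := List.getElem_mem (l := k.primeFactorsList) i.isLt
          exact Nat.mem_primeFactors.2 ⟨Nat.prime_of_mem_primeFactorsList hp,
            (Nat.dvd_of_mem_primeFactorsList hp).trans hkn, hn⟩
        · rw [← List.prod_ofFn, List.ofFn_getElem,
            Nat.prod_primeFactorsList (ne_zero_of_dvd_ne_zero hn hkn)]
    _ ≤ _ := sum_image_le_of_nonneg fun k _ => hf k

lemma rpow_mul_log_pow_prod_le {m : ℕ} (hm : m ≠ 0) (c : ℝ) (g : Fin m → ℕ)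
    (hg : ∀ i, g i ≠ 0) :
    ((∏ i, g i : ℕ) : ℝ) ^ c * log (∏ i, g i : ℕ) ^ m ≤
      m ^ (m - 1) * ∑ i, (∏ j, (g j : ℝ) ^ c) * log (g i) ^ m := by
  obtain ⟨k, rfl⟩ := Nat.exists_eq_add_one_of_ne_zero hm
  have hlog := pow_sum_le_card_mul_sum_pow (s := univ) (f := fun i => log (g i : ℝ))
    (fun i _ => log_natCast_nonneg _) k
  push_cast
  rw [← finsetProd_rpow _ _ (fun i _ => by positivity), log_prod fun i _ => by exact_mod_cast hg i,
    ← mul_sum]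
  simp only [card_univ, Fintype.card_fin] at hlog ⊢
  calc _ ≤ (∏ j, (g j : ℝ) ^ c) * ((k + 1 : ℕ) ^ k * ∑ i, log (g i) ^ (k + 1)) :=
        mul_le_mul_of_nonneg_left hlog (by positivity)
    _ = _ := by push_cast; ring

lemma sum_divisors_rpow_mul_log_pow_le {m : ℕ} (hm : m ≠ 0) (c : ℝ) (n : ℕ) :
    ∑ k ∈ n.divisors.filter (fun k => k.primeFactorsList.length = m), (k : ℝ) ^ c * log k ^ m ≤
      m ^ m * ((∑ p ∈ n.primeFactors, (p : ℝ) ^ c * log p ^ m) *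
        (∑ p ∈ n.primeFactors, (p : ℝ) ^ c) ^ (m - 1)) := by
  calc _ ≤ ∑ g ∈ Fintype.piFinset (fun _ : Fin m => n.primeFactors),
          ((∏ i, g i : ℕ) : ℝ) ^ c * log (∏ i, g i : ℕ) ^ m :=
        sum_divisors_filter_length_le_sum_piFinset (fun k => by positivity) n m
    _ ≤ ∑ g ∈ Fintype.piFinset (fun _ : Fin m => n.primeFactors),
          m ^ (m - 1) * ∑ i, (∏ j, (g j : ℝ) ^ c) * log (g i) ^ m := by
        refine sum_le_sum fun g hg => rpow_mul_log_pow_prod_le hm c g fun i => ?_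
        exact (Nat.prime_of_mem_primeFactors (Fintype.mem_piFinset.1 hg i)).ne_zero
    _ = _ := by
        rw [← mul_sum, sum_comm, sum_congr rfl fun i _ => sum_piFinset_prod_mul_apply _
          (fun x : ℕ => (x : ℝ) ^ c) (fun x : ℕ => log x ^ m) i, sum_const, card_univ, Fintype.card_fin, nsmul_eq_mul, ← mul_assoc, ← pow_succ,
          Nat.sub_add_cancel (Nat.one_le_iff_ne_zero.2 hm)]

lemma exists_add_one_pow_mul_pow_le (k : ℕ) {r : ℝ} (hr0 : 0 < r) (hr1 : r < 1) :
    ∃ M, ∀ n : ℕ, ((n : ℝ) + 1) ^ k * r ^ n ≤ M := by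
  obtain ⟨M, hM⟩ := (tendsto_pow_const_mul_const_pow_of_abs_lt_one k
    (by rwa [abs_of_pos hr0])).bddAbove_range
  refine ⟨M / r, fun n => (le_div_iff₀ hr0).2 ?_⟩
  simpa [pow_succ, mul_assoc] using hM ⟨n + 1, rfl⟩

lemma exists_mul_sum_pow_div_le {ρ : ℝ} (hρ : 1 < ρ) :
    ∃ K, 0 ≤ K ∧ ∀ t : ℕ, ((t : ℝ) + 1) * ∑ j ∈ Icc 1 t, ρ ^ j / j ≤ K * ρ ^ t := by
  have hr : ‖ρ⁻¹‖ < 1 := by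
    rw [norm_inv, Real.norm_of_nonneg (by linarith)]; exact inv_lt_one_of_one_lt₀ hρ
  set g : ℕ → ℝ := fun d => ((d : ℝ) + 2) * ρ⁻¹ ^ d
  have hg : Summable g := by
    refine ((summable_pow_mul_geometric_of_norm_lt_one 1 hr).add
      ((summable_geometric_of_norm_lt_one hr).mul_left 2)).congr fun d => ?_
    simp only [g]; ring
  have hg0 (d : ℕ) : 0 ≤ g d := by positivity
  refine ⟨∑' d, g d, tsum_nonneg hg0, fun t => ?_⟩
  have hterm : ∀ j ∈ Icc 1 t, ((t : ℝ) + 1) * (ρ ^ j / j) ≤ ρ ^ t * g (t - j) := by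
    intro j hj
    obtain ⟨hj1, hjt⟩ := mem_Icc.1 hj
    have hj1' : (1 : ℝ) ≤ j := by exact_mod_cast hj1
    have hjt' : (j : ℝ) ≤ t := by exact_mod_cast hjt
    have hρt : ρ ^ t * ρ⁻¹ ^ (t - j) = ρ ^ j := by
      rw [← Nat.add_sub_cancel' hjt, pow_add, Nat.add_sub_cancel_left, inv_pow,
        mul_inv_cancel_right₀ (by positivity)]
    calc ((t : ℝ) + 1) * (ρ ^ j / j) = ρ ^ j * ((t + 1) / j) := by ring
      _ ≤ ρ ^ j * ((t - j : ℕ) + 2) := by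
          gcongr
          rw [div_le_iff₀ (by linarith), Nat.cast_sub hjt]
          nlinarith
      _ = ρ ^ t * g (t - j) := by rw [← hρt]; simp only [g]; ring
  calc ((t : ℝ) + 1) * ∑ j ∈ Icc 1 t, ρ ^ j / j ≤ ∑ j ∈ Icc 1 t, ρ ^ t * g (t - j) := by
        rw [mul_sum]; exact sum_le_sum hterm
    _ = ρ ^ t * ∑ d ∈ (Icc 1 t).image (t - ·), g d := by
        rw [← mul_sum, sum_image fun a ha b hb h => by
          simp only [coe_Icc, Set.mem_Icc] at ha hb; omega]
    _ ≤ ρ ^ t * ∑' d, g d := by gcongr; exact hg.sum_le_tsum _ fun d _ => hg0 d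
    _ = (∑' d, g d) * ρ ^ t := mul_comm _ _

lemma mul_card_le_of_log_eq {Q : Finset ℕ} (hQ : ∀ p ∈ Q, p.Prime) {j : ℕ}
    (hj : ∀ p ∈ Q, Nat.log 2 p = j) : j * #Q ≤ 2 ^ (j + 2) := by
  have hlt (p) (hp : p ∈ Q) : p < 2 ^ (j + 1) := hj p hp ▸ Nat.lt_pow_succ_log_self one_lt_two p
  have hprod : ∏ p ∈ Q, p ≤ 4 ^ 2 ^ (j + 1) := by
    refine (Nat.le_of_dvd (primorial_pos _) (prod_dvd_prod_of_subset _ _ id ?_)).trans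
      (primorial_le_four_pow _)
    exact fun p hp => mem_filter.2 ⟨mem_range.2 (by linarith [hlt p hp]), hQ p hp⟩
  have hpow : (2 ^ j) ^ #Q ≤ ∏ p ∈ Q, p := by
    rw [← prod_const]
    exact prod_le_prod' fun p hp => hj p hp ▸ Nat.pow_log_le_self 2 (hQ p hp).ne_zero
  have h4 : (4 : ℕ) ^ 2 ^ (j + 1) = 2 ^ 2 ^ (j + 2) := by
    rw [show (4 : ℕ) = 2 ^ 2 by rfl, ← pow_mul, pow_succ' 2 (j + 1)]
  rw [← pow_mul] at hpow
  rw [h4] at hprod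
  exact (Nat.pow_le_pow_iff_right one_lt_two).1 (hpow.trans hprod)

section Dyadic

variable {ρ : ℝ}

lemma mul_sum_dyadic_le_of_log_le {K : ℝ} (hρ : 0 ≤ ρ)
    (hK : ∀ t : ℕ, ((t : ℝ) + 1) * ∑ j ∈ Icc 1 t, ρ ^ j / j ≤ K * ρ ^ t) (σ : ℕ)
    {Q : Finset ℕ} (hQ : ∀ p ∈ Q, p.Prime) {t : ℕ} (hQt : ∀ p ∈ Q, Nat.log 2 p ≤ t) :
    ((t : ℝ) + 1) * ∑ p ∈ Q, (ρ / 2) ^ Nat.log 2 p * ((Nat.log 2 p : ℝ) + 1) ^ σ ≤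
      4 * K * ρ ^ t * ((t : ℝ) + 1) ^ σ := by
  have hmaps : ∀ p ∈ Q, Nat.log 2 p ∈ Icc 1 t := fun p hp =>
    mem_Icc.2 ⟨Nat.log_pos one_lt_two (hQ p hp).two_le, hQt p hp⟩
  have hfiber : ∀ j ∈ Icc 1 t, ∑ p ∈ Q with Nat.log 2 p = j,
      (ρ / 2) ^ Nat.log 2 p * ((Nat.log 2 p : ℝ) + 1) ^ σ ≤
        4 * ((t : ℝ) + 1) ^ σ * (ρ ^ j / j) := by
    intro j hj
    obtain ⟨hj1, hjt⟩ := mem_Icc.1 hj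
    have hj0 : (0 : ℝ) < j := by exact_mod_cast hj1
    set N := #{p ∈ Q | Nat.log 2 p = j}
    have hN : (j : ℝ) * N ≤ 2 ^ (j + 2) := by
      exact_mod_cast mul_card_le_of_log_eq (fun p hp => hQ p (mem_filter.1 hp).1)
        fun p hp => (mem_filter.1 hp).2
    calc _ = N * ((ρ / 2) ^ j * ((j : ℝ) + 1) ^ σ) := by
          rw [sum_congr rfl fun p hp => by rw [(mem_filter.1 hp).2], sum_const, nsmul_eq_mul]
      _ ≤ N * ((ρ / 2) ^ j * ((t : ℝ) + 1) ^ σ) := by gcongr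
      _ = j * N * (ρ ^ j / 2 ^ j) * ((t : ℝ) + 1) ^ σ / j := by rw [div_pow]; field_simp
      _ ≤ 2 ^ (j + 2) * (ρ ^ j / 2 ^ j) * ((t : ℝ) + 1) ^ σ / j := by gcongr
      _ = 4 * ((t : ℝ) + 1) ^ σ * (ρ ^ j / j) := by rw [pow_add]; field_simp; ring
  calc _ = ((t : ℝ) + 1) * ∑ j ∈ Icc 1 t, ∑ p ∈ Q with Nat.log 2 p = j,
        (ρ / 2) ^ Nat.log 2 p * ((Nat.log 2 p : ℝ) + 1) ^ σ := by
        rw [sum_fiberwise_of_maps_to hmaps]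
    _ ≤ ((t : ℝ) + 1) * ∑ j ∈ Icc 1 t, 4 * ((t : ℝ) + 1) ^ σ * (ρ ^ j / j) := by
        gcongr with j hj; exact hfiber j hj
    _ = 4 * ((t : ℝ) + 1) ^ σ * (((t : ℝ) + 1) * ∑ j ∈ Icc 1 t, ρ ^ j / j) := by
        rw [← mul_sum]; ring
    _ ≤ 4 * ((t : ℝ) + 1) ^ σ * (K * ρ ^ t) := mul_le_mul_of_nonneg_left (hK t) (by positivity)
    _ = _ := by ring

lemma mul_sum_dyadic_le_of_le_log {M : ℝ} (hρ : 0 ≤ ρ) (σ : ℕ)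
    (hM : ∀ d : ℕ, ((d : ℝ) + 1) ^ σ * (ρ / 2) ^ d ≤ M) {Q : Finset ℕ} {t : ℕ}
    (hQt : ∀ p ∈ Q, t ≤ Nat.log 2 p) (hcard : (t + 1) * #Q ≤ 2 ^ (t + 1)) :
    ((t : ℝ) + 1) * ∑ p ∈ Q, (ρ / 2) ^ Nat.log 2 p * ((Nat.log 2 p : ℝ) + 1) ^ σ ≤
      2 * M * ρ ^ t * ((t : ℝ) + 1) ^ σ := by
  have hM0 : 0 ≤ M := le_trans (by positivity) (hM 0)
  have hterm : ∀ p ∈ Q, (ρ / 2) ^ Nat.log 2 p * ((Nat.log 2 p : ℝ) + 1) ^ σ ≤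
      M * ((ρ / 2) ^ t * ((t : ℝ) + 1) ^ σ) := by
    intro p hp
    obtain ⟨d, hd⟩ := Nat.exists_eq_add_of_le (hQt p hp)
    rw [hd, pow_add]
    push_cast
    calc (ρ / 2) ^ t * (ρ / 2) ^ d * ((t : ℝ) + d + 1) ^ σ
        ≤ (ρ / 2) ^ t * (ρ / 2) ^ d * (((t : ℝ) + 1) * (d + 1)) ^ σ := by
          gcongr; nlinarith [(t.cast_nonneg : (0 : ℝ) ≤ t), (d.cast_nonneg : (0 : ℝ) ≤ d)]
      _ = (((d : ℝ) + 1) ^ σ * (ρ / 2) ^ d) * ((ρ / 2) ^ t * ((t : ℝ) + 1) ^ σ) := by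
          rw [mul_pow]; ring
      _ ≤ M * ((ρ / 2) ^ t * ((t : ℝ) + 1) ^ σ) := by gcongr; exact hM d
  have hcard' : ((t : ℝ) + 1) * #Q ≤ 2 ^ (t + 1) := by exact_mod_cast hcard
  calc _ ≤ ((t : ℝ) + 1) * (#Q * (M * ((ρ / 2) ^ t * ((t : ℝ) + 1) ^ σ))) := by
        gcongr; simpa using sum_le_card_nsmul _ _ _ hterm
    _ = ((t : ℝ) + 1) * #Q * (M * ((ρ / 2) ^ t * ((t : ℝ) + 1) ^ σ)) := by ring
    _ ≤ 2 ^ (t + 1) * (M * ((ρ / 2) ^ t * ((t : ℝ) + 1) ^ σ)) := by gcongr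
    _ = _ := by rw [div_pow, pow_succ]; field_simp

lemma exists_mul_sum_dyadic_le (hρ1 : 1 < ρ) (hρ2 : ρ < 2) (σ : ℕ) :
    ∃ K, 0 < K ∧ ∀ Q : Finset ℕ, (∀ p ∈ Q, p.Prime) → ∀ t : ℕ,
      ∑ p ∈ Q, Nat.log 2 p < 2 ^ (t + 1) →
      ((t : ℝ) + 1) * ∑ p ∈ Q, (ρ / 2) ^ Nat.log 2 p * ((Nat.log 2 p : ℝ) + 1) ^ σ ≤
        K * ρ ^ t * ((t : ℝ) + 1) ^ σ := by
  obtain ⟨K, hK0, hK⟩ := exists_mul_sum_pow_div_le hρ1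
  have hρ0 : 0 ≤ ρ := by linarith
  obtain ⟨M, hM⟩ := exists_add_one_pow_mul_pow_le σ (r := ρ / 2) (by positivity) (by linarith)
  have hM1 : 1 ≤ M := by simpa using hM 0
  refine ⟨4 * K + 2 * M, by linarith, fun Q hQ t hB => ?_⟩
  have hcard : (t + 1) * #{p ∈ Q | ¬Nat.log 2 p ≤ t} ≤ 2 ^ (t + 1) :=
    calc (t + 1) * #{p ∈ Q | ¬Nat.log 2 p ≤ t} = #{p ∈ Q | ¬Nat.log 2 p ≤ t} • (t + 1) := by
          rw [smul_eq_mul, mul_comm]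
      _ ≤ ∑ p ∈ Q with ¬Nat.log 2 p ≤ t, Nat.log 2 p :=
          card_nsmul_le_sum _ _ _ fun p hp => not_le.1 (mem_filter.1 hp).2
      _ ≤ ∑ p ∈ Q, Nat.log 2 p := sum_le_sum_of_subset (filter_subset _ _)
      _ ≤ 2 ^ (t + 1) := hB.le
  rw [← sum_filter_add_sum_filter_not Q (Nat.log 2 · ≤ t), mul_add]
  refine (add_le_add
    (mul_sum_dyadic_le_of_log_le hρ0 hK σ (fun p hp => hQ p (mem_filter.1 hp).1)
      fun p hp => (mem_filter.1 hp).2)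
    (mul_sum_dyadic_le_of_le_log hρ0 σ hM (fun p hp => (not_le.1 (mem_filter.1 hp).2).le)
      hcard)).trans_eq ?_
  ring

end Dyadic

lemma rpow_mul_log_pow_le_dyadic {c : ℝ} (hc : c ≤ 0) (σ : ℕ) {p : ℕ} (hp : p ≠ 0) :
    (p : ℝ) ^ c * log p ^ σ ≤ (2 ^ c) ^ Nat.log 2 p * ((Nat.log 2 p : ℝ) + 1) ^ σ := by
  have hpow : ((2 ^ Nat.log 2 p : ℕ) : ℝ) ≤ p := by exact_mod_cast Nat.pow_log_le_self 2 hp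
  have hlt : (p : ℝ) < ((2 ^ (Nat.log 2 p + 1) : ℕ) : ℝ) := by
    exact_mod_cast Nat.lt_pow_succ_log_self one_lt_two p
  have hlog : log p ≤ Nat.log 2 p + 1 :=
    calc log p ≤ log ((2 ^ (Nat.log 2 p + 1) : ℕ) : ℝ) := log_le_log (by positivity) hlt.le
      _ = (Nat.log 2 p + 1) * log 2 := by push_cast; rw [log_pow]; push_cast; ring
      _ ≤ Nat.log 2 p + 1 :=
          mul_le_of_le_one_right (by positivity) (log_two_lt_d9.le.trans (by norm_num))
  have hrpow : (p : ℝ) ^ c ≤ (2 ^ c) ^ Nat.log 2 p :=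
    calc (p : ℝ) ^ c ≤ ((2 ^ Nat.log 2 p : ℕ) : ℝ) ^ c :=
          rpow_le_rpow_of_nonpos (by positivity) hpow hc
      _ = _ := by push_cast; rw [rpow_pow_comm zero_le_two]
  exact mul_le_mul hrpow (pow_le_pow_left₀ (log_natCast_nonneg p) hlog σ) (by positivity)
    (by positivity)

lemma exists_mul_sum_rpow_mul_log_pow_le {a : ℝ} (ha0 : 0 < a) (ha1 : a < 1) (σ : ℕ) :
    ∃ K, 0 < K ∧ ∀ Q : Finset ℕ, (∀ p ∈ Q, p.Prime) → ∀ t : ℕ,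
      ∑ p ∈ Q, Nat.log 2 p < 2 ^ (t + 1) →
      ((t : ℝ) + 1) * ∑ p ∈ Q, (p : ℝ) ^ (a - 1) * log p ^ σ ≤
        K * (2 ^ a) ^ t * ((t : ℝ) + 1) ^ σ := by
  obtain ⟨K, hK0, hK⟩ := exists_mul_sum_dyadic_le (one_lt_rpow one_lt_two ha0)
    (by simpa using rpow_lt_rpow_of_exponent_lt one_lt_two ha1) σ
  refine ⟨K, hK0, fun Q hQ t hB => le_trans (mul_le_mul_of_nonneg_left
    (sum_le_sum fun p hp => ?_) (by positivity)) (hK Q hQ t hB)⟩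
  rw [← rpow_sub_one two_ne_zero]
  exact rpow_mul_log_pow_le_dyadic (sub_nonpos.2 ha1.le) σ (hQ p hp).ne_zero

lemma four_pow_log_sum_log_primeFactors_le {n : ℕ} (hn : 2 ≤ n) :
    (4 : ℝ) ^ Nat.log 2 (∑ p ∈ n.primeFactors, Nat.log 2 p) ≤ (log n / log 2) ^ 2 := by
  set B := ∑ p ∈ n.primeFactors, Nat.log 2 p
  have h2B : 2 ^ B ≤ n :=
    calc 2 ^ B = ∏ p ∈ n.primeFactors, 2 ^ Nat.log 2 p := (prod_pow_eq_pow_sum _ _ _).symm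
      _ ≤ ∏ p ∈ n.primeFactors, p :=
          prod_le_prod' fun p hp => Nat.pow_log_le_self 2 (Nat.prime_of_mem_primeFactors hp).ne_zero
      _ ≤ n := Nat.le_of_dvd (by omega) (Nat.prod_primeFactors_dvd n)
  have hB0 : B ≠ 0 := by
    obtain ⟨p, hp⟩ := Nat.nonempty_primeFactors.2 (by omega : 1 < n)
    exact fun h => (Nat.log_pos one_lt_two (Nat.prime_of_mem_primeFactors hp).two_le).ne'
      (sum_eq_zero_iff.1 h p hp)
  have hBlog : (B : ℝ) ≤ log n / log 2 := by
    rw [le_div_iff₀ (log_pos one_lt_two), ← log_pow]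
    exact log_le_log (by positivity) (by exact_mod_cast h2B)
  calc (4 : ℝ) ^ Nat.log 2 B = ((2 ^ Nat.log 2 B : ℕ) : ℝ) ^ 2 := by
        push_cast; rw [← pow_mul, mul_comm, pow_mul]; norm_num
    _ ≤ (B : ℝ) ^ 2 := by gcongr; exact_mod_cast Nat.pow_log_le_self 2 hB0
    _ ≤ (log n / log 2) ^ 2 := by gcongr

lemma mul_pow_le_of_mul_le {T x y A B : ℝ} {m : ℕ} (hm : m ≠ 0) (hT : 0 < T) (hx : 0 ≤ x)
    (hy : 0 ≤ y) (hTx : T * x ≤ A * T ^ m) (hTy : T * y ≤ B) :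
    x * y ^ (m - 1) ≤ A * B ^ (m - 1) := by
  obtain ⟨k, rfl⟩ := Nat.exists_eq_add_one_of_ne_zero hm
  rw [Nat.add_sub_cancel]
  refine le_of_mul_le_mul_left ?_ (pow_pos hT (k + 1))
  calc T ^ (k + 1) * (x * y ^ k) = T * x * (T * y) ^ k := by ring
    _ ≤ A * T ^ (k + 1) * B ^ k := by gcongr; exact (mul_nonneg hT.le hx).trans hTx
    _ = T ^ (k + 1) * (A * B ^ k) := by ring

/-- for every `m ≥ 3` there is a constant `C_m > 0` such that for every
`n ≥ 2`, `∑_{k∣n, Ω(k)=m} k^{2/m−1} (log k)^m ≤ C_m (log n)²`, where `Ω` counts prime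
factors with multiplicity. -/
theorem divisor_sum_m_homogeneous_bound (m : ℕ) (hm : 3 ≤ m) :
    ∃ C : ℝ, 0 < C ∧ ∀ n : ℕ, 2 ≤ n →
      ∑ k ∈ n.divisors.filter (fun k => k.primeFactorsList.length = m),
          (k : ℝ) ^ (2 / (m : ℝ) - 1) * Real.log k ^ m
        ≤ C * Real.log n ^ 2 := by
  have hm0 : m ≠ 0 := by omega
  have ha1 : 2 / (m : ℝ) < 1 := (div_lt_one (by positivity)).2 (by exact_mod_cast hm)
  obtain ⟨K, hK0, hK⟩ := exists_mul_sum_rpow_mul_log_pow_le (by positivity) ha1 m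
  obtain ⟨K₀, hK₀0, hK₀⟩ := exists_mul_sum_rpow_mul_log_pow_le (by positivity) ha1 0
  refine ⟨m ^ m * (K * K₀ ^ (m - 1)) / log 2 ^ 2, by positivity, fun n hn => ?_⟩
  have hQ (p) (hp : p ∈ n.primeFactors) : p.Prime := Nat.prime_of_mem_primeFactors hp
  set t := Nat.log 2 (∑ p ∈ n.primeFactors, Nat.log 2 p)
  have hB := Nat.lt_pow_succ_log_self one_lt_two (∑ p ∈ n.primeFactors, Nat.log 2 p)
  have hV := hK₀ _ hQ t hB
  simp only [pow_zero, mul_one] at hV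
  set ρ : ℝ := 2 ^ (2 / m : ℝ)
  have hρm : ρ ^ m = 4 := by
    rw [← rpow_natCast, ← rpow_mul zero_le_two, div_mul_cancel₀ _ (by positivity)]; norm_num
  have hρt : ρ ^ t * (ρ ^ t) ^ (m - 1) = 4 ^ t := by
    rw [← pow_succ', Nat.sub_add_cancel (by omega), ← pow_mul, mul_comm, pow_mul, hρm]
  calc _ ≤ m ^ m * ((∑ p ∈ n.primeFactors, (p : ℝ) ^ (2 / (m : ℝ) - 1) * log p ^ m) *
          (∑ p ∈ n.primeFactors, (p : ℝ) ^ (2 / (m : ℝ) - 1)) ^ (m - 1)) :=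
        sum_divisors_rpow_mul_log_pow_le hm0 _ n
    _ ≤ m ^ m * ((K * ρ ^ t) * (K₀ * ρ ^ t) ^ (m - 1)) := mul_le_mul_of_nonneg_left
        (mul_pow_le_of_mul_le hm0 (by positivity) (by positivity) (by positivity)
          (hK _ hQ t hB) hV) (by positivity)
    _ = m ^ m * (K * K₀ ^ (m - 1)) * 4 ^ t := by rw [← hρt, mul_pow]; ring
    _ ≤ m ^ m * (K * K₀ ^ (m - 1)) * (log n / log 2) ^ 2 := by
        gcongr; exact four_pow_log_sum_log_primeFactors_le hn
    _ = _ := by ring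
end
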